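/- arXiv:1306.1926 — 7 statements merged into one kernel-verified Lean document; each statement's English description precedes it below -/
import Mathlib

section
/- The optimal value of the incremental matroid design problem with minimum weight bases equals the sum of the stage-wise lower bounds: the minimum of Σ_{i=0}^{T} f(A_i) over all sequences ∅ = A_0 ⊆ A_1 ⊆ ⋯ ⊆ A_T ⊆ E \ E₀ with |A_i \ A_{i-1}| = 1 for each i ∈ {1,…,T} is exactly Σ_{t=0}^{T} F_t. -/
open Set

variable {α : Type*}

/-- The total weight of a set of elements. -/
noncomputable def setWeight (w : α → ℝ) (X : Set α) : ℝ := ∑ᶠ e ∈ X, w e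

/-- `f(A)`: the minimum weight of a basis of `M` contained in `E₀ ∪ A`. -/
noncomputable def minBasisWeight (M : Matroid α) (w : α → ℝ) (E₀ A : Set α) : ℝ :=
  sInf {r : ℝ | ∃ X, M.IsBase X ∧ X ⊆ E₀ ∪ A ∧ setWeight w X = r}

/-- `F t`: the minimum of `f(A)` over all `A ⊆ E \ E₀` with `|A| = t`. -/
noncomputable def stageLowerBound (M : Matroid α) (w : α → ℝ) (E₀ : Set α) (t : ℕ) : ℝ :=
  sInf {r : ℝ | ∃ A, A ⊆ M.E \ E₀ ∧ A.ncard = t ∧ minBasisWeight M w E₀ A = r}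

lemma setWeight_eq_sum {w : α → ℝ} {X : Set α} (hX : X.Finite) :
    setWeight w X = ∑ e ∈ hX.toFinset, w e := by
  rw [setWeight, ← finsum_mem_coe_finset]
  simp

lemma setWeight_swap {w : α → ℝ} {X : Set α} (hX : X.Finite) {e f : α} (he : e ∈ X)
    (hf : f ∉ X) : setWeight w (insert f (X \ {e})) = setWeight w X - w e + w f := by
  classical
  have h1 : (insert f (X \ {e})).Finite := ((hX.diff (t := _)).insert f)
  rw [setWeight_eq_sum h1, setWeight_eq_sum hX]
  have h2 : h1.toFinset = insert f (hX.toFinset.erase e) := by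
    ext x; simp [and_comm]
  rw [h2, Finset.sum_insert (by simp [hf]), Finset.sum_erase_eq_sub (by simpa using he)]
  ring

lemma basesFinite (M : Matroid α) [M.Finite] : {B | M.IsBase B}.Finite :=
  M.ground_finite.finite_subsets.subset (fun _ hB => hB.subset_ground)

section MBW
variable {M : Matroid α} [M.Finite] {w : α → ℝ} {E₀ : Set α}

lemma mBW_set_eq (M : Matroid α) (w : α → ℝ) (E₀ A : Set α) :
    {r : ℝ | ∃ X, M.IsBase X ∧ X ⊆ E₀ ∪ A ∧ setWeight w X = r}
      = (setWeight w) '' {X | M.IsBase X ∧ X ⊆ E₀ ∪ A} := by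
  ext r; simp [Set.mem_image, and_assoc]

lemma mBW_finite (A : Set α) :
    {r : ℝ | ∃ X, M.IsBase X ∧ X ⊆ E₀ ∪ A ∧ setWeight w X = r}.Finite := by
  rw [mBW_set_eq]
  exact ((basesFinite M).subset (fun X hX => hX.1)).image _

omit [M.Finite] in
lemma mBW_nonempty (hbase : ∃ B, M.IsBase B ∧ B ⊆ E₀) (A : Set α) :
    {r : ℝ | ∃ X, M.IsBase X ∧ X ⊆ E₀ ∪ A ∧ setWeight w X = r}.Nonempty := by
  obtain ⟨B, hB, hBE⟩ := hbase
  exact ⟨setWeight w B, B, hB, hBE.trans subset_union_left, rfl⟩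

lemma mBW_le {X : Set α} (hX : M.IsBase X) {A : Set α} (hsub : X ⊆ E₀ ∪ A) :
    minBasisWeight M w E₀ A ≤ setWeight w X :=
  csInf_le (mBW_finite A).bddBelow ⟨X, hX, hsub, rfl⟩

lemma mBW_attained (hbase : ∃ B, M.IsBase B ∧ B ⊆ E₀) (A : Set α) :
    ∃ X, M.IsBase X ∧ X ⊆ E₀ ∪ A ∧ setWeight w X = minBasisWeight M w E₀ A :=
  (mBW_nonempty hbase A).csInf_mem (mBW_finite A)

lemma stage_set_eq (M : Matroid α) (w : α → ℝ) (E₀ : Set α) (t : ℕ) :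
    {r : ℝ | ∃ A, A ⊆ M.E \ E₀ ∧ A.ncard = t ∧ minBasisWeight M w E₀ A = r}
      = (minBasisWeight M w E₀) '' {A | A ⊆ M.E \ E₀ ∧ A.ncard = t} := by
  ext r; simp [Set.mem_image, and_assoc]

lemma stage_finite (t : ℕ) :
    {r : ℝ | ∃ A, A ⊆ M.E \ E₀ ∧ A.ncard = t ∧ minBasisWeight M w E₀ A = r}.Finite := by
  rw [stage_set_eq]
  exact ((M.ground_finite.diff (t := E₀)).finite_subsets.subset (fun A hA => hA.1)).image _

lemma stage_le {A : Set α} (hA : A ⊆ M.E \ E₀) {t : ℕ} (ht : A.ncard = t) :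
    stageLowerBound M w E₀ t ≤ minBasisWeight M w E₀ A :=
  csInf_le (stage_finite t).bddBelow ⟨A, hA, ht, rfl⟩

lemma stage_attained {t : ℕ} (ht : t ≤ (M.E \ E₀).ncard) :
    ∃ A, A ⊆ M.E \ E₀ ∧ A.ncard = t ∧ minBasisWeight M w E₀ A = stageLowerBound M w E₀ t := by
  have hne : {r : ℝ | ∃ A, A ⊆ M.E \ E₀ ∧ A.ncard = t ∧ minBasisWeight M w E₀ A = r}.Nonempty := by
    obtain ⟨A, hA, hAcard⟩ := Set.exists_subset_card_eq ht
    exact ⟨_, A, hA, hAcard, rfl⟩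
  exact hne.csInf_mem (stage_finite t)
end MBW


/-- M1: replace `e ∈ B` by `f ∉ closure (B \ {e})`. -/
lemma base_swap_of_not_mem_closure {M : Matroid α} {B : Set α} (hB : M.IsBase B)
    {e f : α} (he : e ∈ B) (hf : f ∈ M.E) (hfcl : f ∉ M.closure (B \ {e})) :
    M.IsBase (insert f (B \ {e})) := by
  by_cases hfe : f = e
  · subst hfe
    rwa [insert_diff_singleton, insert_eq_of_mem he]
  have hfB : f ∉ B := by
    intro hfB
    exact hfcl (M.subset_closure (B \ {e})
      ((diff_subset (t := {e})).trans hB.subset_ground) ⟨hfB, hfe⟩)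
  have hI : M.Indep (insert f (B \ {e})) := by
    rw [(hB.indep.diff {e}).insert_indep_iff_of_notMem (fun h => hfB h.1)]
    exact ⟨hf, hfcl⟩
  exact hB.exchange_isBase_of_indep (e := e) hfB hI

/-- M2: exchange into a base avoiding the closure of `S`. -/
lemma exchange_avoid {M : Matroid α} {B S : Set α} {e : α} (hB : M.IsBase B)
    (he : e ∈ M.E) (heB : e ∉ B) (hS : e ∉ M.closure S) :
    ∃ f ∈ B, f ∉ M.closure S ∧ M.IsBase (insert e (B \ {f})) := by
  have hBS : M.Indep (B ∩ M.closure S) := hB.indep.subset inter_subset_left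
  have hIi : M.Indep (insert e (B ∩ M.closure S)) := by
    rw [hBS.insert_indep_iff_of_notMem (fun h => hS h.2)]
    refine ⟨he, fun hecl => hS ?_⟩
    exact M.closure_subset_closure_of_subset_closure inter_subset_right hecl
  obtain ⟨B', hB', hIB', hB'sub⟩ := hIi.exists_isBase_subset_union_isBase hB
  have heB' : e ∈ B' := hIB' (mem_insert _ _)
  have hB'B : B' \ B ⊆ {e} := by
    intro x hx
    rcases hB'sub hx.1 with h | h
    · rcases h with h | h
      · exact h
      · exact absurd h.1 hx.2
    · exact absurd h hx.2
  have hB'Beq : B' \ B = {e} := hB'B.antisymm (by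
    rintro x rfl; exact ⟨heB', heB⟩)
  have hdiff : (B \ B').encard = 1 := by
    rw [← hB'.encard_diff_comm hB, hB'Beq, encard_singleton]
  obtain ⟨f, hfeq⟩ := encard_eq_one.1 hdiff
  have hfB : f ∈ B ∧ f ∉ B' := by
    have : f ∈ B \ B' := hfeq ▸ rfl
    exact ⟨this.1, this.2⟩
  have hfcl : f ∉ M.closure S := by
    intro hf
    exact hfB.2 (hIB' (mem_insert_of_mem _ ⟨hfB.1, hf⟩))
  have hBf : B \ {f} = B' \ {e} := by
    ext x
    constructor
    · rintro ⟨hxB, hxf⟩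
      have hxB' : x ∈ B' := by
        by_contra hxB'
        have : x ∈ B \ B' := ⟨hxB, hxB'⟩
        rw [hfeq] at this
        exact hxf this
      refine ⟨hxB', fun hxe => heB ?_⟩
      simp only [mem_singleton_iff] at hxe
      rwa [hxe] at hxB
    · rintro ⟨hxB', hxe⟩
      have hxB : x ∈ B := by
        rcases hB'sub hxB' with h | h
        · rcases h with h | h
          · exact absurd h hxe
          · exact h.1
        · exact h
      refine ⟨hxB, fun hxf => hfB.2 ?_⟩
      simp only [mem_singleton_iff] at hxf
      rwa [hxf] at hxB'
  refine ⟨f, hfB.1, hfcl, ?_⟩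
  have : insert e (B \ {f}) = B' := by
    rw [hBf, insert_diff_singleton, insert_eq_of_mem heB']
  rwa [this]

open Classical in
/-- The penalized weight. -/
noncomputable def vw (w : α → ℝ) (E₀ : Set α) (lam : ℝ) : α → ℝ :=
  fun x => w x + if x ∈ E₀ then 0 else lam

/-- `B` is a minimum-weight base for the penalized weight. -/
def OptAt (M : Matroid α) (w : α → ℝ) (E₀ : Set α) (lam : ℝ) (B : Set α) : Prop :=
  M.IsBase B ∧ ∀ W, M.IsBase W → setWeight (vw w E₀ lam) B ≤ setWeight (vw w E₀ lam) W

lemma baseFinite {M : Matroid α} [M.Finite] {B : Set α} (hB : M.IsBase B) : B.Finite :=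
  M.ground_finite.subset hB.subset_ground

lemma setWeight_vw {w : α → ℝ} {E₀ : Set α} {lam : ℝ} {X : Set α} (hX : X.Finite) :
    setWeight (vw w E₀ lam) X = setWeight w X + lam * ((X \ E₀).ncard) := by
  classical
  rw [setWeight_eq_sum hX, setWeight_eq_sum hX]
  unfold vw
  rw [Finset.sum_add_distrib]
  congr 1
  rw [show (fun x => if x ∈ E₀ then (0:ℝ) else lam) = fun x => if x ∈ E₀ then (0:ℝ) else lam from rfl]
  have h1 : ∑ x ∈ hX.toFinset, (if x ∈ E₀ then (0:ℝ) else lam)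
      = ∑ x ∈ hX.toFinset.filter (fun x => x ∉ E₀), lam := by
    rw [Finset.sum_filter]
    apply Finset.sum_congr rfl
    intro x _
    by_cases hx : x ∈ E₀ <;> simp [hx]
  rw [h1, Finset.sum_const]
  have h2 : (X \ E₀).ncard = (hX.toFinset.filter (fun x => x ∉ E₀)).card := by
    rw [Set.ncard_eq_toFinset_card _ (hX.diff (t := E₀))]
    congr 1
    ext x; simp [and_comm]
  rw [h2]
  simp [mul_comm]

lemma optAt_swap {M : Matroid α} [M.Finite] {w : α → ℝ} {E₀ : Set α} {lam : ℝ}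
    {Z Y : Set α} {e f : α}
    (hZ : OptAt M w E₀ lam Z) (hY : OptAt M w E₀ lam Y)
    (he : e ∈ Z) (heY : e ∉ Y) (hfY : f ∈ Y) (hfZ : f ∉ Z)
    (hZ' : M.IsBase (insert f (Z \ {e}))) (hY' : M.IsBase (insert e (Y \ {f}))) :
    OptAt M w E₀ lam (insert f (Z \ {e})) := by
  set u := vw w E₀ lam with hu
  have hZfin := baseFinite hZ.1
  have hYfin := baseFinite hY.1
  have hwZ' : setWeight u (insert f (Z \ {e})) = setWeight u Z - u e + u f :=
    setWeight_swap hZfin he hfZ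
  have hwY' : setWeight u (insert e (Y \ {f})) = setWeight u Y - u f + u e :=
    setWeight_swap hYfin hfY heY
  have hfe : u f ≤ u e := by
    have := hY.2 _ hY'
    rw [hwY'] at this
    linarith
  refine ⟨hZ', fun W hW => ?_⟩
  rw [hwZ']
  have := hZ.2 W hW
  linarith

lemma shrink {M : Matroid α} [M.Finite] {w : α → ℝ} {E₀ : Set α} {lam : ℝ} :
    ∀ (n : ℕ) (X Y : Set α), OptAt M w E₀ lam X → OptAt M w E₀ lam Y →
      ((X \ E₀) \ Y).ncard = n →
      ∃ Z, OptAt M w E₀ lam Z ∧ Z \ E₀ ⊆ Y \ E₀ ∧ (Z \ E₀).ncard ≤ (X \ E₀).ncard := by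
  intro n
  induction n with
  | zero =>
    intro X Y hX hY h0
    have hfin : ((X \ E₀) \ Y).Finite := ((baseFinite hX.1).diff (t := E₀)).diff (t := Y)
    have hempty : (X \ E₀) \ Y = ∅ := (Set.ncard_eq_zero hfin).1 h0
    refine ⟨X, hX, ?_, le_rfl⟩
    intro x hx
    have hxY : x ∈ Y := by
      by_contra hxY
      exact absurd (Set.eq_empty_iff_forall_notMem.1 hempty x) (by simp [hx, hxY])
    exact ⟨hxY, hx.2⟩
  | succ n ih =>
    intro X Y hX hY hn
    have hfinXE : (X \ E₀).Finite := (baseFinite hX.1).diff (t := E₀)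
    have hne : ((X \ E₀) \ Y).Nonempty := by
      rw [Set.nonempty_iff_ne_empty]
      intro h
      rw [h] at hn; simp at hn
    obtain ⟨e, he⟩ := hne
    have heX : e ∈ X := he.1.1
    have heE₀ : e ∉ E₀ := he.1.2
    have heY : e ∉ Y := he.2
    have heME : e ∈ M.E := hX.1.subset_ground heX
    have hecl : e ∉ M.closure (X \ {e}) := hX.1.indep.notMem_closure_diff_of_mem heX
    obtain ⟨f, hfY, hfcl, hY'⟩ := exchange_avoid hY.1 heME heY hecl
    have hfX : f ∉ X := by
      intro hfX
      have hfe : f ≠ e := by rintro rfl; exact heY hfY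
      exact hfcl (M.subset_closure (X \ {e})
        ((diff_subset (t := {e})).trans hX.1.subset_ground) ⟨hfX, hfe⟩)
    have hX' : M.IsBase (insert f (X \ {e})) :=
      base_swap_of_not_mem_closure hX.1 heX (hY.1.subset_ground hfY) hfcl
    have hopt : OptAt M w E₀ lam (insert f (X \ {e})) :=
      optAt_swap hX hY heX heY hfY hfX hX' hY'
    -- set bookkeeping
    have hsub1 : (insert f (X \ {e}) \ E₀) \ Y = ((X \ E₀) \ Y) \ {e} := by
      ext x
      constructor
      · rintro ⟨⟨hx1, hx2⟩, hx3⟩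
        rcases hx1 with rfl | hx1
        · exact absurd hfY hx3
        · exact ⟨⟨⟨hx1.1, hx2⟩, hx3⟩, hx1.2⟩
      · rintro ⟨⟨⟨hx1, hx2⟩, hx3⟩, hx4⟩
        exact ⟨⟨Or.inr ⟨hx1, hx4⟩, hx2⟩, hx3⟩
    have hcard1 : ((insert f (X \ {e}) \ E₀) \ Y).ncard = n := by
      rw [hsub1]
      have : e ∈ (X \ E₀) \ Y := he
      have h5 := Set.ncard_diff_singleton_add_one this ((hfinXE).diff (t := Y))
      omega
    have hcard2 : (insert f (X \ {e}) \ E₀).ncard ≤ (X \ E₀).ncard := by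
      have hsub2 : insert f (X \ {e}) \ E₀ ⊆ insert f ((X \ E₀) \ {e}) := by
        rintro x ⟨hx1, hx2⟩
        rcases hx1 with rfl | hx1
        · exact mem_insert _ _
        · exact mem_insert_of_mem _ ⟨⟨hx1.1, hx2⟩, hx1.2⟩
      calc (insert f (X \ {e}) \ E₀).ncard
          ≤ (insert f ((X \ E₀) \ {e})).ncard :=
            Set.ncard_le_ncard hsub2 (((hfinXE.diff (t := _)).insert f))
        _ ≤ ((X \ E₀) \ {e}).ncard + 1 := Set.ncard_insert_le _ _
        _ ≤ (X \ E₀).ncard := by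
            have h5 := Set.ncard_diff_singleton_add_one (show e ∈ X \ E₀ from ⟨heX, heE₀⟩) hfinXE
            omega
    obtain ⟨Z, hZopt, hZsub, hZcard⟩ := ih _ Y hopt hY hcard1
    exact ⟨Z, hZopt, hZsub, hZcard.trans hcard2⟩

lemma grow {M : Matroid α} [M.Finite] {w : α → ℝ} {E₀ : Set α} {lam : ℝ} {Z Y : Set α}
    (hZ : OptAt M w E₀ lam Z) (hY : OptAt M w E₀ lam Y) (hsub : Z \ E₀ ⊆ Y \ E₀)
    (hlt : (Z \ E₀).ncard < (Y \ E₀).ncard) :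
    ∃ Z', OptAt M w E₀ lam Z' ∧ Z' \ E₀ ⊆ Y \ E₀ ∧
      (Z' \ E₀).ncard = (Z \ E₀).ncard + 1 := by
  have hYfin : (Y \ E₀).Finite := (baseFinite hY.1).diff (t := E₀)
  have hne : ((Y \ E₀) \ (Z \ E₀)).Nonempty := by
    rw [Set.nonempty_iff_ne_empty]
    intro h
    have : Y \ E₀ ⊆ Z \ E₀ := by
      intro x hx
      by_contra hx2
      exact absurd (Set.eq_empty_iff_forall_notMem.1 h x) (by simp [hx, hx2])
    exact absurd (Set.ncard_le_ncard this ((baseFinite hZ.1).diff (t := E₀))) (by omega)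
  obtain ⟨e, he⟩ := hne
  have heY : e ∈ Y := he.1.1
  have heE₀ : e ∉ E₀ := he.1.2
  have heZ : e ∉ Z := fun h => he.2 ⟨h, heE₀⟩
  have heME : e ∈ M.E := hY.1.subset_ground heY
  have hecl : e ∉ M.closure (Y \ {e}) := hY.1.indep.notMem_closure_diff_of_mem heY
  obtain ⟨f, hfZ, hfcl, hZ'⟩ := exchange_avoid hZ.1 heME heZ hecl
  have hYe_ground : Y \ {e} ⊆ M.E := (diff_subset (t := {e})).trans hY.1.subset_ground
  have hfE₀ : f ∈ E₀ := by
    by_contra hfE₀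
    have : f ∈ Y \ {e} := by
      have := hsub ⟨hfZ, hfE₀⟩
      exact ⟨this.1, fun h => heZ (by simp only [mem_singleton_iff] at h; rwa [h] at hfZ)⟩
    exact hfcl (M.subset_closure _ hYe_ground this)
  have hfY : f ∉ Y := by
    intro hfY
    have hfe : f ≠ e := fun h => heZ (h ▸ hfZ)
    exact hfcl (M.subset_closure _ hYe_ground ⟨hfY, hfe⟩)
  have hY' : M.IsBase (insert f (Y \ {e})) :=
    base_swap_of_not_mem_closure hY.1 heY (hZ.1.subset_ground hfZ) hfcl
  have hopt : OptAt M w E₀ lam (insert e (Z \ {f})) :=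
    optAt_swap hZ hY hfZ hfY heY heZ hZ' hY'
  have hset : insert e (Z \ {f}) \ E₀ = insert e (Z \ E₀) := by
    ext x
    constructor
    · rintro ⟨hx1, hx2⟩
      rcases hx1 with rfl | hx1
      · exact mem_insert _ _
      · exact mem_insert_of_mem _ ⟨hx1.1, hx2⟩
    · rintro (rfl | hx)
      · exact ⟨mem_insert _ _, heE₀⟩
      · refine ⟨mem_insert_of_mem _ ⟨hx.1, fun h => ?_⟩, hx.2⟩
        simp only [mem_singleton_iff] at h
        exact hx.2 (h ▸ hfE₀)
  refine ⟨insert e (Z \ {f}), hopt, ?_, ?_⟩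
  · rw [hset]
    exact insert_subset he.1 hsub
  · rw [hset, Set.ncard_insert_of_notMem (fun h => he.2 h) ((baseFinite hZ.1).diff (t := E₀))]
lemma optAt_exists (M : Matroid α) [M.Finite] (w : α → ℝ) (E₀ : Set α) (lam : ℝ) :
    ∃ B, OptAt M w E₀ lam B := by
  obtain ⟨B₀, hB₀⟩ := M.exists_isBase
  obtain ⟨B, hB, hBmin⟩ := Set.exists_min_image {B | M.IsBase B} (setWeight (vw w E₀ lam))
    (basesFinite M) ⟨B₀, hB₀⟩
  exact ⟨B, hB, fun W hW => hBmin W hW⟩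

lemma baseSubsetUnion {B E₀ : Set α} : B ⊆ E₀ ∪ (B \ E₀) := by
  intro x hx
  by_cases h : x ∈ E₀
  · exact Or.inl h
  · exact Or.inr ⟨hx, h⟩

/-- The value lemma: a `lam`-optimal base with support size `s` realizes `F s`. -/
lemma optAt_stage {M : Matroid α} [M.Finite] {w : α → ℝ} {E₀ : Set α} {lam : ℝ} {B : Set α}
    {s : ℕ} (hbase : ∃ B₀, M.IsBase B₀ ∧ B₀ ⊆ E₀) (hlam : 0 ≤ lam)
    (hopt : OptAt M w E₀ lam B) (hc : (B \ E₀).ncard = s) :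
    stageLowerBound M w E₀ s = setWeight w B := by
  have hBsub : B \ E₀ ⊆ M.E \ E₀ := fun x hx => ⟨hopt.1.subset_ground hx.1, hx.2⟩
  have hsT : s ≤ (M.E \ E₀).ncard := hc ▸ Set.ncard_le_ncard hBsub (M.ground_finite.diff (t := E₀))
  apply le_antisymm
  · exact (stage_le hBsub hc).trans (mBW_le hopt.1 baseSubsetUnion)
  · obtain ⟨A, hA, hAcard, hAval⟩ := stage_attained hsT
    obtain ⟨X, hX, hXsub, hXval⟩ := mBW_attained hbase A
    rw [← hAval, ← hXval]
    have hXE : X \ E₀ ⊆ A := by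
      intro x hx
      rcases hXsub hx.1 with h | h
      · exact absurd h hx.2
      · exact h
    have hcX : (X \ E₀).ncard ≤ s := by
      rw [← hAcard]
      exact Set.ncard_le_ncard hXE ((M.ground_finite.diff (t := E₀)).subset hA)
    have h1 := hopt.2 X hX
    rw [setWeight_vw (baseFinite hopt.1), setWeight_vw (baseFinite hX), hc] at h1
    have h2 : lam * ((X \ E₀).ncard : ℝ) ≤ lam * (s : ℝ) :=
      mul_le_mul_of_nonneg_left (by exact_mod_cast hcX) hlam
    linarith

lemma grow_iter {M : Matroid α} [M.Finite] {w : α → ℝ} {E₀ : Set α} {lam : ℝ} {Y : Set α}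
    (hY : OptAt M w E₀ lam Y) :
    ∀ (d : ℕ) (Z), OptAt M w E₀ lam Z → Z \ E₀ ⊆ Y \ E₀ →
      (Z \ E₀).ncard + d < (Y \ E₀).ncard →
      ∃ Z', OptAt M w E₀ lam Z' ∧ Z' \ E₀ ⊆ Y \ E₀ ∧
        (Z' \ E₀).ncard = (Z \ E₀).ncard + d := by
  intro d
  induction d with
  | zero => intro Z hZ hsub _; exact ⟨Z, hZ, hsub, by omega⟩
  | succ d ih =>
    intro Z hZ hsub hlt
    obtain ⟨Z₁, hZ₁, hZ₁sub, hZ₁card⟩ := grow hZ hY hsub (by omega)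
    obtain ⟨Z', hZ', hZ'sub, hZ'card⟩ := ih Z₁ hZ₁ hZ₁sub (by omega)
    exact ⟨Z', hZ', hZ'sub, by omega⟩

/-- The main step: from a `lam`-optimal base with support size `s ≥ 1`, get a
`lam'`-optimal base with support size `s - 1`, support nested. -/
lemma step_lemma {M : Matroid α} [M.Finite] {w : α → ℝ} {E₀ : Set α}
    (hbase : ∃ B₀, M.IsBase B₀ ∧ B₀ ⊆ E₀) {lam : ℝ} {B : Set α} {s : ℕ}
    (hlam : 0 ≤ lam) (hopt : OptAt M w E₀ lam B) (hc : (B \ E₀).ncard = s) (hs : 1 ≤ s) :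
    ∃ lam' B', 0 ≤ lam' ∧ OptAt M w E₀ lam' B' ∧ (B' \ E₀).ncard = s - 1 ∧
      B' \ E₀ ⊆ B \ E₀ := by
  classical
  obtain ⟨B₀, hB₀, hB₀E⟩ := hbase
  set Low : Set (Set α) := {W | M.IsBase W ∧ (W \ E₀).ncard < s} with hLow
  have hLowFin : Low.Finite := (basesFinite M).subset (fun W hW => hW.1)
  have hLowNe : Low.Nonempty := by
    refine ⟨B₀, hB₀, ?_⟩
    have : B₀ \ E₀ = ∅ := by
      rw [Set.diff_eq_empty]; exact hB₀E
    rw [this]; simpa using (show 0 < s by omega)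
  set r : Set α → ℝ := fun W =>
    (setWeight w W - setWeight w B) / ((s : ℝ) - ((W \ E₀).ncard : ℝ)) with hr
  obtain ⟨W₀, hW₀Low, hW₀min⟩ := Set.exists_min_image Low r hLowFin hLowNe
  set lam' : ℝ := r W₀ with hlam'
  -- basic facts
  have hden : ∀ W ∈ Low, (0:ℝ) < (s : ℝ) - ((W \ E₀).ncard : ℝ) := by
    intro W hW
    have := hW.2
    have : ((W \ E₀).ncard : ℝ) < (s : ℝ) := by exact_mod_cast this
    linarith
  have hopt_ineq : ∀ W, M.IsBase W → setWeight w B + lam * (s:ℝ) ≤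
      setWeight w W + lam * (((W \ E₀).ncard : ℝ)) := by
    intro W hW
    have := hopt.2 W hW
    rw [setWeight_vw (baseFinite hopt.1), setWeight_vw (baseFinite hW), hc] at this
    linarith
  have hlam_le : ∀ W ∈ Low, lam ≤ r W := by
    intro W hW
    rw [hr]
    rw [le_div_iff₀ (hden W hW)]
    have := hopt_ineq W hW.1
    ring_nf
    nlinarith [hopt_ineq W hW.1]
  have hlam'0 : lam ≤ lam' := hlam_le W₀ hW₀Low
  -- B is optimal at lam'
  have hoptB' : OptAt M w E₀ lam' B := by
    refine ⟨hopt.1, fun W hW => ?_⟩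
    rw [setWeight_vw (baseFinite hopt.1), setWeight_vw (baseFinite hW), hc]
    by_cases hWlow : W ∈ Low
    · have h1 : lam' ≤ r W := hW₀min W hWlow
      rw [hr] at h1
      rw [le_div_iff₀ (hden W hWlow)] at h1
      nlinarith
    · have hcW : s ≤ (W \ E₀).ncard := by
        by_contra h
        exact hWlow ⟨hW, by omega⟩
      have hcWR : (s:ℝ) ≤ ((W \ E₀).ncard : ℝ) := by exact_mod_cast hcW
      have := hopt_ineq W hW
      nlinarith
  -- W₀ is optimal at lam'
  have heq : setWeight (vw w E₀ lam') W₀ = setWeight (vw w E₀ lam') B := by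
    rw [setWeight_vw (baseFinite hW₀Low.1), setWeight_vw (baseFinite hopt.1), hc]
    have : lam' * ((s:ℝ) - ((W₀ \ E₀).ncard : ℝ)) = setWeight w W₀ - setWeight w B := by
      rw [hlam', hr]
      have hd := hden W₀ hW₀Low
      field_simp
    linarith [this]
  have hoptW₀ : OptAt M w E₀ lam' W₀ :=
    ⟨hW₀Low.1, fun W hW => heq ▸ hoptB'.2 W hW⟩
  -- shrink W₀'s support into B's support
  obtain ⟨Z, hZopt, hZsub, hZcard⟩ :=
    shrink ((W₀ \ E₀) \ B).ncard W₀ B hoptW₀ hoptB' rfl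
  -- grow to exactly s - 1
  have hZB : Z \ E₀ ⊆ B \ E₀ := hZsub
  have hZle : (Z \ E₀).ncard ≤ s - 1 := by
    have := hW₀Low.2
    omega
  obtain ⟨Z', hZ'opt, hZ'sub, hZ'card⟩ :=
    grow_iter hoptB' ((s - 1) - (Z \ E₀).ncard) Z hZopt hZB (by omega)
  exact ⟨lam', Z', hlam.trans hlam'0, hZ'opt, by omega, hZ'sub⟩
/-- Descending chain of nested optimal supports. -/
lemma chain_exists {M : Matroid α} [M.Finite] {w : α → ℝ} {E₀ : Set α}
    (hbase : ∃ B₀, M.IsBase B₀ ∧ B₀ ⊆ E₀) {Bstar : Set α} (hBstar : OptAt M w E₀ 0 Bstar) :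
    ∀ (i : ℕ), i ≤ (Bstar \ E₀).ncard → ∃ S : ℕ → Set α,
      S ((Bstar \ E₀).ncard) = Bstar \ E₀ ∧
      (∀ j, (Bstar \ E₀).ncard - i ≤ j → j ≤ (Bstar \ E₀).ncard →
        (S j).ncard = j ∧ (∃ lam Bj, 0 ≤ lam ∧ OptAt M w E₀ lam Bj ∧ Bj \ E₀ = S j)) ∧
      (∀ j, (Bstar \ E₀).ncard - i ≤ j → j < (Bstar \ E₀).ncard → S j ⊆ S (j+1)) := by
  classical
  set s₀ := (Bstar \ E₀).ncard with hs₀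
  intro i
  induction i with
  | zero =>
    intro _
    refine ⟨fun _ => Bstar \ E₀, rfl, ?_, ?_⟩
    · intro j hj1 hj2
      have hj : j = s₀ := by omega
      subst hj
      exact ⟨rfl, 0, Bstar, le_rfl, hBstar, rfl⟩
    · intro j hj1 hj2; omega
  | succ i ih =>
    intro hi1
    obtain ⟨S, hStop, hSdata, hSmono⟩ := ih (by omega)
    set k := s₀ - i with hk
    have hk1 : 1 ≤ k := by omega
    obtain ⟨hSk_card, lam, Bk, hlam, hBk_opt, hBk_supp⟩ := hSdata k (by omega) (by omega)
    have hBk_card : (Bk \ E₀).ncard = k := by rw [hBk_supp]; exact hSk_card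
    obtain ⟨lam', B', hlam', hB'opt, hB'card, hB'sub⟩ :=
      step_lemma hbase hlam hBk_opt hBk_card hk1
    set S' : ℕ → Set α := fun j => if j = k - 1 then B' \ E₀ else S j with hS'
    have hkne : ¬ (k = k - 1) := by omega
    have hkne2 : ¬ (s₀ = k - 1) := by omega
    refine ⟨S', by simp [hS', hkne2, hStop], ?_, ?_⟩
    · intro j hj1 hj2
      by_cases hjk : j = k - 1
      · subst hjk
        refine ⟨by simp [hS', hB'card], lam', B', hlam', hB'opt, by simp [hS']⟩
      · have : S' j = S j := by simp [hS', hjk]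
        rw [this]
        exact hSdata j (by omega) hj2
    · intro j hj1 hj2
      by_cases hjk : j = k - 1
      · subst hjk
        have h1 : S' (k-1) = B' \ E₀ := by simp [hS']
        have h2 : (k-1) + 1 = k := by omega
        have h3 : S' ((k-1)+1) = S k := by
          rw [h2]; simp [hS', hkne]
        rw [h1, h3, ← hBk_supp]
        exact hB'sub
      · have h1 : S' j = S j := by simp [hS', hjk]
        have h2 : S' (j+1) = S (j+1) := by
          have : ¬ (j + 1 = k - 1) := by omega
          simp [hS', this]
        rw [h1, h2]
        exact hSmono j (by omega) hj2

/-- Padding chain: extend a set one element at a time inside `U`. -/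
lemma pad_chain {U : Set α} (hU : U.Finite) {S : Set α} (hS : S ⊆ U) :
    ∀ m, S.ncard + m ≤ U.ncard → ∃ C : ℕ → Set α, C 0 = S ∧
      (∀ k ≤ m, C k ⊆ U ∧ (C k).ncard = S.ncard + k) ∧
      (∀ k < m, C k ⊆ C (k+1)) := by
  classical
  intro m
  induction m with
  | zero =>
    intro _
    exact ⟨fun _ => S, rfl, fun k hk => by
      have : k = 0 := by omega
      subst this; exact ⟨hS, by simp⟩, fun k hk => by omega⟩
  | succ m ih =>
    intro hm
    obtain ⟨C, hC0, hCdata, hCmono⟩ := ih (by omega)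
    obtain ⟨hCm_sub, hCm_card⟩ := hCdata m le_rfl
    have hne : (U \ C m).Nonempty := by
      rw [Set.nonempty_iff_ne_empty]
      intro h
      have hsub : U ⊆ C m := by
        intro x hx
        by_contra hx2
        exact absurd (Set.eq_empty_iff_forall_notMem.1 h x) (by simp [hx, hx2])
      have := Set.ncard_le_ncard hsub (hU.subset hCm_sub)
      omega
    obtain ⟨x, hx⟩ := hne
    set C' : ℕ → Set α := fun k => if k = m + 1 then insert x (C m) else C k with hC'
    refine ⟨C', by simp [hC', hC0], ?_, ?_⟩
    · intro k hk
      by_cases hkm : k = m + 1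
      · subst hkm
        have hCeq : C' (m+1) = insert x (C m) := by simp [hC']
        constructor
        · rw [hCeq]; exact insert_subset hx.1 hCm_sub
        · rw [hCeq, Set.ncard_insert_of_notMem hx.2 (hU.subset hCm_sub)]; omega
      · have : C' k = C k := by simp [hC', hkm]
        rw [this]
        exact hCdata k (by omega)
    · intro k hk
      by_cases hkm : k = m
      · subst hkm
        have h1 : C' k = C k := by simp [hC']
        have h2 : C' (k+1) = insert x (C k) := by simp [hC']
        rw [h1, h2]
        exact subset_insert _ _
      · have h1 : C' k = C k := by
          have : ¬ (k = m+1) := by omega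
          simp [hC', this]
        have h2 : C' (k+1) = C (k+1) := by
          have : ¬ (k+1 = m+1) := by omega
          simp [hC', this, hkm]
        rw [h1, h2]
        exact hCmono k (by omega)

/-- The optimal value of the incremental matroid design problem with minimum weight
bases equals the sum of the stage-wise lower bounds `F_0 + F_1 + ⋯ + F_T`. -/
theorem imd_mwb_value (M : Matroid α) [M.Finite] (w : α → ℝ) (E₀ : Set α)
    (hE₀ : E₀ ⊆ M.E) (hbase : ∃ B, M.IsBase B ∧ B ⊆ E₀) :
    sInf {r : ℝ | ∃ A : ℕ → Set α, A 0 = ∅ ∧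
        (∀ i, 1 ≤ i → i ≤ (M.E \ E₀).ncard →
          A (i - 1) ⊆ A i ∧ (A i \ A (i - 1)).ncard = 1) ∧
        (∀ i ≤ (M.E \ E₀).ncard, A i ⊆ M.E \ E₀) ∧
        ∑ i ∈ Finset.range ((M.E \ E₀).ncard + 1), minBasisWeight M w E₀ (A i) = r} =
      ∑ t ∈ Finset.range ((M.E \ E₀).ncard + 1), stageLowerBound M w E₀ t := by
  classical
  set T := (M.E \ E₀).ncard with hT
  have hUfin : (M.E \ E₀).Finite := M.ground_finite.diff (t := E₀)
  -- Part 1 : every chain value is at least the sum of stage lower bounds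
  have hlow : ∀ r ∈ {r : ℝ | ∃ A : ℕ → Set α, A 0 = ∅ ∧
      (∀ i, 1 ≤ i → i ≤ T → A (i - 1) ⊆ A i ∧ (A i \ A (i - 1)).ncard = 1) ∧
      (∀ i ≤ T, A i ⊆ M.E \ E₀) ∧
      ∑ i ∈ Finset.range (T + 1), minBasisWeight M w E₀ (A i) = r},
      ∑ t ∈ Finset.range (T + 1), stageLowerBound M w E₀ t ≤ r := by
    rintro r ⟨A, hA0, hAstep, hAsub, hAsum⟩
    have hAcard : ∀ i ≤ T, (A i).ncard = i := by
      intro i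
      induction i with
      | zero => intro _; rw [hA0]; simp
      | succ i ihi =>
        intro hi
        obtain ⟨hsub, hdiff⟩ := hAstep (i+1) (by omega) hi
        simp only [Nat.add_sub_cancel] at hsub hdiff
        have hfin : (A (i+1)).Finite := hUfin.subset (hAsub (i+1) hi)
        have h1 := Set.ncard_diff_add_ncard_of_subset hsub hfin
        have h2 := ihi (by omega)
        omega
    rw [← hAsum]
    refine Finset.sum_le_sum (fun i hi => ?_)
    have hiT : i ≤ T := by
      have := Finset.mem_range.1 hi; omega
    exact stage_le (hAsub i hiT) (hAcard i hiT)
  -- Part 2 : construct an optimal chain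
  obtain ⟨Bstar, hBstar⟩ := optAt_exists M w E₀ 0
  set s₀ := (Bstar \ E₀).ncard with hs₀
  have hBstar_sub : Bstar \ E₀ ⊆ M.E \ E₀ :=
    fun x hx => ⟨hBstar.1.subset_ground hx.1, hx.2⟩
  have hs₀T : s₀ ≤ T := Set.ncard_le_ncard hBstar_sub hUfin
  obtain ⟨S, hStop, hSdata, hSmono⟩ := chain_exists hbase hBstar s₀ le_rfl
  obtain ⟨C, hC0, hCdata, hCmono⟩ :=
    pad_chain hUfin hBstar_sub (T - s₀) (by omega)
  have hCmono' : ∀ k ≤ T - s₀, C 0 ⊆ C k := by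
    intro k
    induction k with
    | zero => intro _; exact subset_rfl
    | succ k ihk => intro hk; exact (ihk (by omega)).trans (hCmono k (by omega))
  set A : ℕ → Set α := fun i => if i ≤ s₀ then S i else C (i - s₀) with hA
  have hSsub : ∀ j ≤ s₀, S j ⊆ M.E \ E₀ := by
    intro j hj
    obtain ⟨_, lam, Bj, _, hBj, hsupp⟩ := hSdata j (by omega) hj
    rw [← hsupp]
    exact fun x hx => ⟨hBj.1.subset_ground hx.1, hx.2⟩
  have hAsub : ∀ i ≤ T, A i ⊆ M.E \ E₀ := by
    intro i hi
    by_cases his : i ≤ s₀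
    · rw [hA]; simp only [his, if_true]; exact hSsub i his
    · rw [hA]; simp only [his, if_false]; exact (hCdata (i - s₀) (by omega)).1
  have hAcard : ∀ i ≤ T, (A i).ncard = i := by
    intro i hi
    by_cases his : i ≤ s₀
    · rw [hA]; simp only [his, if_true]; exact (hSdata i (by omega) his).1
    · rw [hA]; simp only [his, if_false]
      have := (hCdata (i - s₀) (by omega)).2
      rw [this]
      omega
  have hA0 : A 0 = ∅ := by
    have h0 : (A 0).ncard = 0 := hAcard 0 (by omega)
    have hfin : (A 0).Finite := hUfin.subset (hAsub 0 (by omega))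
    exact (Set.ncard_eq_zero hfin).1 h0
  have hAmono : ∀ i, 1 ≤ i → i ≤ T → A (i-1) ⊆ A i := by
    intro i hi1 hiT
    by_cases his : i ≤ s₀
    · have h1 : A (i-1) = S (i-1) := by rw [hA]; simp only [show i-1 ≤ s₀ by omega, if_true]
      have h2 : A i = S i := by rw [hA]; simp only [his, if_true]
      rw [h1, h2]
      have := hSmono (i-1) (by omega) (by omega)
      rwa [show i - 1 + 1 = i by omega] at this
    · by_cases his1 : i - 1 ≤ s₀
      · -- i = s₀ + 1
        have hieq : i = s₀ + 1 := by omega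
        have h1 : A (i-1) = S s₀ := by
          rw [hA]; simp only [show i - 1 ≤ s₀ by omega, if_true]
          rw [show i - 1 = s₀ by omega]
        have h2 : A i = C 1 := by
          rw [hA]; simp only [his, if_false]
          rw [show i - s₀ = 1 by omega]
        rw [h1, h2, hStop, ← hC0]
        exact hCmono 0 (by omega)
      · have h1 : A (i-1) = C (i-1-s₀) := by rw [hA]; simp only [his1, if_false]
        have h2 : A i = C (i-s₀) := by rw [hA]; simp only [his, if_false]
        rw [h1, h2]
        have := hCmono (i-1-s₀) (by omega)
        rwa [show i - 1 - s₀ + 1 = i - s₀ by omega] at this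
  have hAstep : ∀ i, 1 ≤ i → i ≤ T → A (i-1) ⊆ A i ∧ (A i \ A (i-1)).ncard = 1 := by
    intro i hi1 hiT
    refine ⟨hAmono i hi1 hiT, ?_⟩
    have hfin : (A i).Finite := hUfin.subset (hAsub i hiT)
    have h1 := Set.ncard_diff_add_ncard_of_subset (hAmono i hi1 hiT) hfin
    have h2 := hAcard i hiT
    have h3 := hAcard (i-1) (by omega)
    omega
  -- the minimum over all bases is the weight of Bstar
  have hBstar_min : ∀ X, M.IsBase X → setWeight w Bstar ≤ setWeight w X := by
    intro X hX
    have := hBstar.2 X hX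
    rw [setWeight_vw (baseFinite hBstar.1), setWeight_vw (baseFinite hX)] at this
    simpa using this
  have hAval : ∀ i ≤ T, minBasisWeight M w E₀ (A i) = stageLowerBound M w E₀ i := by
    intro i hi
    by_cases his : i ≤ s₀
    · obtain ⟨hScard, lam, Bi, hlam, hBi, hsupp⟩ := hSdata i (by omega) his
      have hAi : A i = S i := by rw [hA]; simp only [his, if_true]
      have hstage : stageLowerBound M w E₀ i = setWeight w Bi :=
        optAt_stage hbase hlam hBi (by rw [hsupp]; exact hScard)
      have h1 : minBasisWeight M w E₀ (A i) ≤ setWeight w Bi := by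
        refine mBW_le hBi.1 ?_
        rw [hAi, ← hsupp]
        exact baseSubsetUnion
      have h2 : stageLowerBound M w E₀ i ≤ minBasisWeight M w E₀ (A i) :=
        stage_le (hAsub i hi) (hAcard i hi)
      exact le_antisymm (h1.trans_eq hstage.symm) h2
    · have hAi : A i = C (i - s₀) := by rw [hA]; simp only [his, if_false]
      have hBin : Bstar \ E₀ ⊆ A i := by
        rw [hAi, ← hC0]
        exact hCmono' (i - s₀) (by omega)
      have h1 : minBasisWeight M w E₀ (A i) ≤ setWeight w Bstar := by
        refine mBW_le hBstar.1 ?_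
        exact baseSubsetUnion.trans (union_subset_union_right _ hBin)
      have h2 : stageLowerBound M w E₀ i ≤ minBasisWeight M w E₀ (A i) :=
        stage_le (hAsub i hi) (hAcard i hi)
      have h3 : setWeight w Bstar ≤ stageLowerBound M w E₀ i := by
        obtain ⟨A', hA', hA'card, hA'val⟩ := stage_attained (M := M) (w := w) (t := i) hi
        obtain ⟨X, hX, hXsub, hXval⟩ := mBW_attained hbase A'
        rw [← hA'val, ← hXval]
        exact hBstar_min X hX
      exact le_antisymm (h1.trans h3) h2
  have hsum : ∑ i ∈ Finset.range (T + 1), minBasisWeight M w E₀ (A i)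
      = ∑ t ∈ Finset.range (T + 1), stageLowerBound M w E₀ t := by
    refine Finset.sum_congr rfl (fun i hi => ?_)
    exact hAval i (by have := Finset.mem_range.1 hi; omega)
  have hmem : (∑ t ∈ Finset.range (T + 1), stageLowerBound M w E₀ t) ∈
      {r : ℝ | ∃ A : ℕ → Set α, A 0 = ∅ ∧
        (∀ i, 1 ≤ i → i ≤ T → A (i - 1) ⊆ A i ∧ (A i \ A (i - 1)).ncard = 1) ∧
        (∀ i ≤ T, A i ⊆ M.E \ E₀) ∧
        ∑ i ∈ Finset.range (T + 1), minBasisWeight M w E₀ (A i) = r} :=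
    ⟨A, hA0, hAstep, hAsub, hsum⟩
  exact le_antisymm (csInf_le ⟨_, hlow⟩ hmem) (le_csInf ⟨_, hmem⟩ hlow)
end

section
/- There exists a nested sequence of sets that is simultaneously optimal at every stage: there is a chain ∅ = A_0 ⊆ A_1 ⊆ ⋯ ⊆ A_T = E \ E₀ with |A_i \ A_{i-1}| = 1 for each i ∈ {1,…,T} such that f(A_i) = F_i for every i ∈ {0,1,…,T}. -/
open Set

variable {α : Type*}

section Aux

variable {M : Matroid α} {w : α → ℝ} {E₀ : Set α}

lemma setWeight_exchange {X : Set α} {e x : α} (hX : X.Finite) (he : e ∈ X) (hx : x ∉ X) :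
    setWeight w (insert x (X \ {e})) = setWeight w X - w e + w x := by
  classical
  have h1 : (X \ {e}).Finite := hX.diff
  have h2 : (insert x (X \ {e})).Finite := h1.insert x
  rw [setWeight, setWeight, finsum_mem_eq_finite_toFinset_sum _ h2,
    finsum_mem_eq_finite_toFinset_sum _ hX]
  have e1 : h2.toFinset = insert x (hX.toFinset.erase e) := by
    ext z
    simp only [Finite.mem_toFinset, Set.mem_insert_iff, Set.mem_diff, Set.mem_singleton_iff,
      Finset.mem_insert, Finset.mem_erase, Finite.mem_toFinset]
    tauto
  have hxmem : x ∉ hX.toFinset.erase e := by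
    simp only [Finset.mem_erase, Finite.mem_toFinset]; tauto
  rw [e1, Finset.sum_insert hxmem]
  have := Finset.add_sum_erase hX.toFinset w (hX.mem_toFinset.2 he)
  linarith

/-- Attainment and lower-bound property of `minBasisWeight`. -/
lemma minBasisWeight_spec [M.Finite] (hbase : ∃ B, M.IsBase B ∧ B ⊆ E₀) (A : Set α) :
    (∃ X, M.IsBase X ∧ X ⊆ E₀ ∪ A ∧ setWeight w X = minBasisWeight M w E₀ A) ∧
    ∀ X, M.IsBase X → X ⊆ E₀ ∪ A → minBasisWeight M w E₀ A ≤ setWeight w X := by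
  have hfin : {r : ℝ | ∃ X, M.IsBase X ∧ X ⊆ E₀ ∪ A ∧ setWeight w X = r}.Finite := by
    refine ((M.ground_finite.finite_subsets).image (setWeight w)).subset ?_
    rintro r ⟨X, hX, -, rfl⟩
    exact ⟨X, hX.subset_ground, rfl⟩
  have hne : {r : ℝ | ∃ X, M.IsBase X ∧ X ⊆ E₀ ∪ A ∧ setWeight w X = r}.Nonempty := by
    obtain ⟨B, hB, hBE⟩ := hbase
    exact ⟨_, B, hB, hBE.trans subset_union_left, rfl⟩
  constructor
  · have := hne.csInf_mem hfin
    obtain ⟨X, h1, h2, h3⟩ := this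
    exact ⟨X, h1, h2, h3⟩
  · intro X h1 h2
    exact csInf_le hfin.bddBelow ⟨X, h1, h2, rfl⟩

lemma minBasisWeight_anti [M.Finite] (hbase : ∃ B, M.IsBase B ∧ B ⊆ E₀) {A A' : Set α}
    (h : A ⊆ A') : minBasisWeight M w E₀ A' ≤ minBasisWeight M w E₀ A := by
  obtain ⟨X, hX, hXsub, hXw⟩ := (minBasisWeight_spec (w := w) hbase A).1
  rw [← hXw]
  exact (minBasisWeight_spec hbase A').2 X hX (hXsub.trans (union_subset_union_right _ h))

/-- Attainment and lower-bound property of `stageLowerBound`. -/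
lemma stageLowerBound_spec [M.Finite] (hbase : ∃ B, M.IsBase B ∧ B ⊆ E₀) {t : ℕ}
    (ht : t ≤ (M.E \ E₀).ncard) :
    (∃ A, A ⊆ M.E \ E₀ ∧ A.ncard = t ∧ minBasisWeight M w E₀ A = stageLowerBound M w E₀ t) ∧
    ∀ A, A ⊆ M.E \ E₀ → A.ncard = t → stageLowerBound M w E₀ t ≤ minBasisWeight M w E₀ A := by
  have hfin : {r : ℝ | ∃ A, A ⊆ M.E \ E₀ ∧ A.ncard = t ∧ minBasisWeight M w E₀ A = r}.Finite := by
    refine (((M.ground_finite.diff (t := E₀)).finite_subsets).image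
      (minBasisWeight M w E₀)).subset ?_
    rintro r ⟨A, hA, -, rfl⟩
    exact ⟨A, hA, rfl⟩
  have hne : {r : ℝ | ∃ A, A ⊆ M.E \ E₀ ∧ A.ncard = t ∧ minBasisWeight M w E₀ A = r}.Nonempty := by
    obtain ⟨A, hA1, hA2⟩ := Set.exists_subset_card_eq ht
    exact ⟨_, A, hA1, hA2, rfl⟩
  constructor
  · have := hne.csInf_mem hfin
    obtain ⟨A, h1, h2, h3⟩ := this
    exact ⟨A, h1, h2, h3⟩
  · intro A h1 h2
    exact csInf_le hfin.bddBelow ⟨A, h1, h2, rfl⟩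

/-- Any basis with at most `t` elements outside `E₀` witnesses `F t ≤ w(Y)`. -/
lemma stageLowerBound_le_base [M.Finite] (hbase : ∃ B, M.IsBase B ∧ B ⊆ E₀) {t : ℕ}
    (ht : t ≤ (M.E \ E₀).ncard) {Y : Set α} (hY : M.IsBase Y) (hYr : (Y \ E₀).ncard ≤ t) :
    stageLowerBound M w E₀ t ≤ setWeight w Y := by
  have hRfin : (M.E \ E₀).Finite := M.ground_finite.diff (t := E₀)
  have hYR : Y \ E₀ ⊆ M.E \ E₀ := diff_subset_diff_left hY.subset_ground
  have hYfin : (Y \ E₀).Finite := hRfin.subset hYR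
  obtain ⟨C, hCsub, hCcard⟩ :
      ∃ C ⊆ (M.E \ E₀) \ (Y \ E₀), C.ncard = t - (Y \ E₀).ncard := by
    refine Set.exists_subset_card_eq ?_
    rw [Set.ncard_diff hYR hYfin]
    omega
  have hdisj : Disjoint (Y \ E₀) C :=
    Set.disjoint_of_subset_right hCsub disjoint_sdiff_right
  have hA1 : (Y \ E₀) ∪ C ⊆ M.E \ E₀ := union_subset hYR (hCsub.trans diff_subset)
  have hAcard : ((Y \ E₀) ∪ C).ncard = t := by
    rw [Set.ncard_union_eq hdisj hYfin (hRfin.subset (hCsub.trans diff_subset)), hCcard]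
    omega
  have h1 : minBasisWeight M w E₀ ((Y \ E₀) ∪ C) ≤ setWeight w Y := by
    refine (minBasisWeight_spec hbase _).2 Y hY ?_
    intro z hz
    by_cases hzE : z ∈ E₀
    · exact Or.inl hzE
    · exact Or.inr (Or.inl ⟨hz, hzE⟩)
  exact le_trans ((stageLowerBound_spec hbase ht).2 _ hA1 hAcard) h1

/-- `F` is nonincreasing. -/
lemma stageLowerBound_anti [M.Finite] (hbase : ∃ B, M.IsBase B ∧ B ⊆ E₀) {t : ℕ}
    (ht : t + 1 ≤ (M.E \ E₀).ncard) :
    stageLowerBound M w E₀ (t + 1) ≤ stageLowerBound M w E₀ t := by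
  have hRfin : (M.E \ E₀).Finite := M.ground_finite.diff (t := E₀)
  obtain ⟨A, hA1, hA2, hA3⟩ := (stageLowerBound_spec (w := w) hbase (le_trans (Nat.le_succ t) ht)).1
  have hAne : A ≠ M.E \ E₀ := by
    intro h
    rw [h] at hA2
    omega
  obtain ⟨e, heR, heA⟩ := Set.exists_of_ssubset (ssubset_of_subset_of_ne hA1 hAne)
  have h1 : (insert e A).ncard = t + 1 := by
    rw [Set.ncard_insert_of_notMem heA (hRfin.subset hA1), hA2]
  have h2 : stageLowerBound M w E₀ (t + 1) ≤ minBasisWeight M w E₀ (insert e A) :=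
    (stageLowerBound_spec hbase ht).2 _ (insert_subset heR hA1) h1
  calc stageLowerBound M w E₀ (t + 1) ≤ minBasisWeight M w E₀ (insert e A) := h2
    _ ≤ minBasisWeight M w E₀ A := minBasisWeight_anti hbase (subset_insert e A)
    _ = stageLowerBound M w E₀ t := hA3

/-- Symmetric basis exchange. -/
lemma base_symm_exchange [M.Finite] {X Y : Set α} {e : α} (hX : M.IsBase X) (hY : M.IsBase Y)
    (heX : e ∈ X) (heY : e ∉ Y) :
    ∃ x ∈ Y, x ∉ X ∧ M.IsBase (insert x (X \ {e})) ∧ M.IsBase (insert e (Y \ {x})) := by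
  have heE : e ∈ M.E := hX.subset_ground heX
  have hYfin : Y.Finite := M.set_finite Y hY.subset_ground
  -- a minimal subset J of Y spanning e
  have hJne : {J | J ⊆ Y ∧ e ∈ M.closure J}.Nonempty :=
    ⟨Y, subset_rfl, by rw [hY.closure_eq]; exact heE⟩
  have hJfin : {J | J ⊆ Y ∧ e ∈ M.closure J}.Finite :=
    hYfin.finite_subsets.subset fun J hJ => hJ.1
  obtain ⟨J, ⟨hJY, heJ⟩, hJmin⟩ :=
    Set.Finite.exists_minimalFor Set.ncard _ hJfin hJne
  have hJfin' : J.Finite := hYfin.subset hJY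
  have hmin : ∀ x ∈ J, e ∉ M.closure (J \ {x}) := by
    intro x hx hmem
    have hmem' : (J \ {x}) ∈ {J | J ⊆ Y ∧ e ∈ M.closure J} := ⟨diff_subset.trans hJY, hmem⟩
    have hlt := Set.ncard_diff_singleton_lt_of_mem hx hJfin'
    have := hJmin hmem' hlt.le
    omega
  -- find x ∈ J not spanned by X \ {e}
  have hnotall : ∃ x ∈ J, x ∉ M.closure (X \ {e}) := by
    by_contra h
    push_neg at h
    have h1 : M.closure J ⊆ M.closure (X \ {e}) :=
      M.closure_subset_closure_of_subset_closure h
    exact hX.indep.notMem_closure_diff_of_mem heX (h1 heJ)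
  obtain ⟨x, hxJ, hxcl⟩ := hnotall
  have hxY : x ∈ Y := hJY hxJ
  have hxe : x ≠ e := fun h => heY (h ▸ hxY)
  have hxX : x ∉ X := by
    intro h
    exact hxcl (M.subset_closure (X \ {e}) (diff_subset.trans hX.subset_ground) ⟨h, hxe⟩)
  have hxE : x ∈ M.E := hY.subset_ground hxY
  -- X - e + x is a base
  have hX1 : M.IsBase (insert x (X \ {e})) := by
    refine hX.exchange_isBase_of_indep hxX ?_
    rw [(hX.indep.subset diff_subset).insert_indep_iff_of_notMem
      (fun h => hxX h.1)]
    exact ⟨hxE, hxcl⟩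
  -- e ∉ closure (Y \ {x})
  have hecl : e ∉ M.closure (Y \ {x}) := by
    intro hmem
    have h1 : e ∉ M.closure (J \ {x}) := hmin x hxJ
    have h2 : e ∈ M.closure (insert x (J \ {x})) := by
      rwa [insert_diff_singleton, insert_eq_of_mem hxJ]
    have h3 : x ∈ M.closure (insert e (J \ {x})) := Matroid.mem_closure_insert h1 h2
    have h4 : insert e (J \ {x}) ⊆ M.closure (Y \ {x}) := by
      refine insert_subset hmem ?_
      exact (diff_subset_diff_left hJY).trans
        (M.subset_closure (Y \ {x}) (diff_subset.trans hY.subset_ground))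
    have h5 : M.closure (insert e (J \ {x})) ⊆ M.closure (Y \ {x}) :=
      M.closure_subset_closure_of_subset_closure h4
    exact hY.indep.notMem_closure_diff_of_mem hxY (h5 h3)
  have hY1 : M.IsBase (insert e (Y \ {x})) := by
    refine hY.exchange_isBase_of_indep heY ?_
    rw [(hY.indep.subset diff_subset).insert_indep_iff_of_notMem
      (fun h => heY h.1)]
    exact ⟨heE, hecl⟩
  exact ⟨x, hxY, hxX, hX1, hY1⟩

/-- The crucial step: an optimal set at level `t+1` contains an optimal set at level `t`. -/
lemma crux [M.Finite] (hE₀ : E₀ ⊆ M.E) (hbase : ∃ B, M.IsBase B ∧ B ⊆ E₀) {t : ℕ}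
    (ht : t + 1 ≤ (M.E \ E₀).ncard) {A : Set α} (hAR : A ⊆ M.E \ E₀)
    (hAcard : A.ncard = t + 1)
    (hfA : minBasisWeight M w E₀ A = stageLowerBound M w E₀ (t + 1)) :
    ∃ e ∈ A, minBasisWeight M w E₀ (A \ {e}) = stageLowerBound M w E₀ t := by
  classical
  have hRfin : (M.E \ E₀).Finite := M.ground_finite.diff (t := E₀)
  have hAfin : A.Finite := hRfin.subset hAR
  have htT : t ≤ (M.E \ E₀).ncard := le_trans (Nat.le_succ t) ht
  have hFanti : stageLowerBound M w E₀ (t + 1) ≤ stageLowerBound M w E₀ t :=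
    stageLowerBound_anti hbase ht
  have hper : ∀ e ∈ A, stageLowerBound M w E₀ t ≤ minBasisWeight M w E₀ (A \ {e}) := by
    intro e he
    refine (stageLowerBound_spec hbase htT).2 _ (diff_subset.trans hAR) ?_
    rw [Set.ncard_diff_singleton_of_mem he, hAcard]
    omega
  suffices h : ∃ e ∈ A, minBasisWeight M w E₀ (A \ {e}) ≤ stageLowerBound M w E₀ t by
    obtain ⟨e, he, hle⟩ := h
    exact ⟨e, he, le_antisymm hle (hper e he)⟩
  -- the set of admissible pairs
  set P : Set (Set α × Set α) := {p | (M.IsBase p.1 ∧ p.1 ⊆ E₀ ∪ A ∧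
      setWeight w p.1 = stageLowerBound M w E₀ (t + 1)) ∧
      (M.IsBase p.2 ∧ (p.2 \ E₀).ncard ≤ t ∧ setWeight w p.2 = stageLowerBound M w E₀ t)} with hP
  have hPfin : P.Finite := by
    refine ((M.ground_finite.finite_subsets).prod (M.ground_finite.finite_subsets)).subset ?_
    rintro ⟨X, Y⟩ ⟨⟨hX, -, -⟩, ⟨hY, -, -⟩⟩
    exact ⟨hX.subset_ground, hY.subset_ground⟩
  have hPne : P.Nonempty := by
    obtain ⟨X₀, hX₀, hX₀sub, hwX₀⟩ := (minBasisWeight_spec (w := w) hbase A).1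
    obtain ⟨B, hBR, hBcard, hfB⟩ := (stageLowerBound_spec (w := w) hbase htT).1
    obtain ⟨Y₀, hY₀, hY₀sub, hwY₀⟩ := (minBasisWeight_spec (w := w) hbase B).1
    refine ⟨(X₀, Y₀), ⟨hX₀, hX₀sub, by rw [hwX₀, hfA]⟩, hY₀, ?_, by rw [hwY₀, hfB]⟩
    have hsub : Y₀ \ E₀ ⊆ B := by
      intro z hz
      rcases hY₀sub hz.1 with h | h
      · exact absurd h hz.2
      · exact h
    calc (Y₀ \ E₀).ncard ≤ B.ncard := Set.ncard_le_ncard hsub (hRfin.subset hBR)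
      _ = t := hBcard
  obtain ⟨⟨X, Y⟩, hmem, hmax⟩ :=
    Set.Finite.exists_maximalFor (fun p => (p.1 ∩ p.2).ncard) P hPfin hPne
  obtain ⟨⟨hXbase, hXsub, hwX⟩, hYbase, hYred, hwY⟩ := hmem
  dsimp only at hXbase hXsub hwX hYbase hYred hwY
  by_cases hcase : ∃ e ∈ A, e ∉ X
  · obtain ⟨e, heA, heX⟩ := hcase
    refine ⟨e, heA, ?_⟩
    have h1 : minBasisWeight M w E₀ (A \ {e}) ≤ setWeight w X := by
      refine (minBasisWeight_spec hbase _).2 X hXbase ?_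
      intro z hz
      rcases hXsub hz with h | h
      · exact Or.inl h
      · exact Or.inr ⟨h, fun hc => heX (hc ▸ hz)⟩
    rw [hwX] at h1
    exact h1.trans hFanti
  · push_neg at hcase
    have hAX : A ⊆ X := hcase
    have hXfin : X.Finite := M.set_finite X hXbase.subset_ground
    have hYfin : Y.Finite := M.set_finite Y hYbase.subset_ground
    have heA : ∃ e ∈ A, e ∉ Y := by
      by_contra h
      push_neg at h
      have hsub : A ⊆ Y \ E₀ := fun z hz => ⟨h z hz, (hAR hz).2⟩
      have := Set.ncard_le_ncard hsub (hYfin.diff (t := E₀))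
      omega
    obtain ⟨e, heA, heY⟩ := heA
    have heX : e ∈ X := hAX heA
    obtain ⟨x, hxY, hxX, hX₁, hY₁⟩ := base_symm_exchange hXbase hYbase heX heY
    have hxe : x ≠ e := fun h => heY (h ▸ hxY)
    have hwX₁ : setWeight w (insert x (X \ {e})) =
        stageLowerBound M w E₀ (t + 1) - w e + w x := by
      rw [setWeight_exchange hXfin heX hxX, hwX]
    have hwY₁ : setWeight w (insert e (Y \ {x})) =
        stageLowerBound M w E₀ t - w x + w e := by
      rw [setWeight_exchange hYfin hxY heY, hwY]
    have heE₀ : e ∉ E₀ := (hAR heA).2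
    by_cases hxE : x ∈ E₀
    · -- the exchanged-in element is in E₀ : we win directly
      have hsub : insert x (X \ {e}) ⊆ E₀ ∪ (A \ {e}) := by
        intro z hz
        rcases hz with rfl | ⟨hzX, hze⟩
        · exact Or.inl hxE
        · rcases hXsub hzX with h | h
          · exact Or.inl h
          · exact Or.inr ⟨h, hze⟩
      have h1 : minBasisWeight M w E₀ (A \ {e}) ≤
          stageLowerBound M w E₀ (t + 1) - w e + w x := by
        rw [← hwX₁]
        exact (minBasisWeight_spec hbase _).2 _ hX₁ hsub
      have hred : ((insert e (Y \ {x})) \ E₀).ncard ≤ t + 1 := by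
        have hsub2 : (insert e (Y \ {x})) \ E₀ ⊆ insert e (Y \ E₀) := by
          rintro z ⟨hz, hzE⟩
          rcases hz with rfl | hz
          · exact Or.inl rfl
          · exact Or.inr ⟨hz.1, hzE⟩
        calc ((insert e (Y \ {x})) \ E₀).ncard ≤ (insert e (Y \ E₀)).ncard :=
              Set.ncard_le_ncard hsub2 ((hYfin.diff (t := E₀)).insert e)
          _ ≤ (Y \ E₀).ncard + 1 := Set.ncard_insert_le _ _
          _ ≤ t + 1 := by omega
      have h2 : stageLowerBound M w E₀ (t + 1) ≤ stageLowerBound M w E₀ t - w x + w e := by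
        have := stageLowerBound_le_base (w := w) hbase ht hY₁ hred
        rwa [hwY₁] at this
      exact ⟨e, heA, by linarith⟩
    · -- the exchanged-in element is a new element : improve the pair, contradiction
      have hxE' : x ∈ M.E \ E₀ := ⟨hYbase.subset_ground hxY, hxE⟩
      have hxA : x ∉ A := fun h => hxX (hAX h)
      have hA' : insert x (A \ {e}) ⊆ M.E \ E₀ := insert_subset hxE' (diff_subset.trans hAR)
      have hA'card : (insert x (A \ {e})).ncard = t + 1 := by
        rw [Set.ncard_insert_of_notMem (fun h => hxA h.1) (hAfin.diff (t := {e})),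
          Set.ncard_diff_singleton_of_mem heA, hAcard]
        omega
      have hsub1 : insert x (X \ {e}) ⊆ E₀ ∪ insert x (A \ {e}) := by
        intro z hz
        rcases hz with rfl | ⟨hzX, hze⟩
        · exact Or.inr (Or.inl rfl)
        · rcases hXsub hzX with h | h
          · exact Or.inl h
          · exact Or.inr (Or.inr ⟨h, hze⟩)
      have h1 : stageLowerBound M w E₀ (t + 1) ≤
          stageLowerBound M w E₀ (t + 1) - w e + w x := by
        calc stageLowerBound M w E₀ (t + 1) ≤ minBasisWeight M w E₀ (insert x (A \ {e})) :=
              (stageLowerBound_spec hbase ht).2 _ hA' hA'card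
          _ ≤ setWeight w (insert x (X \ {e})) :=
              (minBasisWeight_spec hbase _).2 _ hX₁ hsub1
          _ = _ := hwX₁
      have hxYE : x ∈ Y \ E₀ := ⟨hxY, hxE⟩
      have hpos : 1 ≤ (Y \ E₀).ncard := by
        have : 0 < (Y \ E₀).ncard := (Set.ncard_pos (hYfin.diff (t := E₀))).2 ⟨x, hxYE⟩
        omega
      have hred : ((insert e (Y \ {x})) \ E₀).ncard ≤ t := by
        have hsub2 : (insert e (Y \ {x})) \ E₀ ⊆ insert e ((Y \ E₀) \ {x}) := by
          rintro z ⟨hz, hzE⟩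
          rcases hz with rfl | hz
          · exact Or.inl rfl
          · exact Or.inr ⟨⟨hz.1, hzE⟩, hz.2⟩
        calc ((insert e (Y \ {x})) \ E₀).ncard ≤ (insert e ((Y \ E₀) \ {x})).ncard :=
              Set.ncard_le_ncard hsub2 (((hYfin.diff (t := E₀)).diff (t := {x})).insert e)
          _ ≤ ((Y \ E₀) \ {x}).ncard + 1 := Set.ncard_insert_le _ _
          _ = (Y \ E₀).ncard - 1 + 1 := by
              rw [Set.ncard_diff_singleton_of_mem hxYE]
          _ ≤ t := by omega
      have h2 : stageLowerBound M w E₀ t ≤ stageLowerBound M w E₀ t - w x + w e := by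
        have := stageLowerBound_le_base (w := w) hbase htT hY₁ hred
        rwa [hwY₁] at this
      have hwxe : w x = w e := by linarith
      have hpair : ((X, insert e (Y \ {x})) : Set α × Set α) ∈ P := by
        refine ⟨⟨hXbase, hXsub, hwX⟩, hY₁, hred, ?_⟩
        rw [hwY₁, hwxe]; ring
      have hXY1 : X ∩ insert e (Y \ {x}) = insert e (X ∩ Y) := by
        ext z
        simp only [mem_inter_iff, Set.mem_insert_iff, Set.mem_diff, Set.mem_singleton_iff]
        constructor
        · rintro ⟨hzX, rfl | ⟨hzY, hzx⟩⟩
          · exact Or.inl rfl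
          · exact Or.inr ⟨hzX, hzY⟩
        · rintro (rfl | ⟨hzX, hzY⟩)
          · exact ⟨heX, Or.inl rfl⟩
          · exact ⟨hzX, Or.inr ⟨hzY, fun hc => hxX (hc ▸ hzX)⟩⟩
      have hmono : (X ∩ Y).ncard < (X ∩ insert e (Y \ {x})).ncard := by
        rw [hXY1, Set.ncard_insert_of_notMem (fun h => heY h.2) (hXfin.inter_of_left Y)]
        omega
      exact absurd (hmax hpair hmono.le) (not_le.2 hmono)

/-- `f(E \ E₀) = F T`. -/
lemma top_stage [M.Finite] (hbase : ∃ B, M.IsBase B ∧ B ⊆ E₀) :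
    minBasisWeight M w E₀ (M.E \ E₀) = stageLowerBound M w E₀ ((M.E \ E₀).ncard) := by
  have hRfin : (M.E \ E₀).Finite := M.ground_finite.diff (t := E₀)
  refine le_antisymm ?_ ((stageLowerBound_spec hbase le_rfl).2 _ subset_rfl rfl)
  obtain ⟨A, hA1, hA2, hA3⟩ := (stageLowerBound_spec (w := w) hbase (le_refl ((M.E \ E₀).ncard))).1
  have : A = M.E \ E₀ := Set.eq_of_subset_of_ncard_le hA1 (by omega) hRfin
  rw [← hA3, this]

end Aux

/-- There exists a nested sequence `∅ = A_0 ⊆ A_1 ⊆ ⋯ ⊆ A_T = E \ E₀` with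
`|A_i \ A_{i-1}| = 1` that is simultaneously optimal at every stage:
`f(A_i) = F_i` for every `i ∈ {0, 1, …, T}`. -/
theorem imd_mwb_nested_optimal_chain (M : Matroid α) [M.Finite] (w : α → ℝ) (E₀ : Set α)
    (hE₀ : E₀ ⊆ M.E) (hbase : ∃ B, M.IsBase B ∧ B ⊆ E₀) :
    ∃ A : ℕ → Set α, A 0 = ∅ ∧ A ((M.E \ E₀).ncard) = M.E \ E₀ ∧
      (∀ i, 1 ≤ i → i ≤ (M.E \ E₀).ncard →
        A (i - 1) ⊆ A i ∧ (A i \ A (i - 1)).ncard = 1) ∧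
      (∀ i ≤ (M.E \ E₀).ncard,
        minBasisWeight M w E₀ (A i) = stageLowerBound M w E₀ i) := by
  classical
  set T := (M.E \ E₀).ncard with hT
  have hRfin : (M.E \ E₀).Finite := M.ground_finite.diff (t := E₀)
  -- descending construction
  have hchain : ∀ k ≤ T, ∃ D : ℕ → Set α, D 0 = M.E \ E₀ ∧
      (∀ j < k, D (j + 1) ⊆ D j ∧ (D j \ D (j + 1)).ncard = 1) ∧
      (∀ j ≤ k, D j ⊆ M.E \ E₀ ∧ (D j).ncard = T - j ∧
        minBasisWeight M w E₀ (D j) = stageLowerBound M w E₀ (T - j)) := by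
    intro k
    induction k with
    | zero =>
      intro _
      refine ⟨fun _ => M.E \ E₀, rfl, by omega, ?_⟩
      intro j hj
      interval_cases j
      refine ⟨subset_rfl, ?_, ?_⟩
      · simp only [Nat.sub_zero]; exact hT.symm
      · simp only [Nat.sub_zero]; exact top_stage hbase
    | succ k ih =>
      intro hk1
      obtain ⟨D, hD0, hDchain, hDinv⟩ := ih (by omega)
      obtain ⟨hsub, hcard, hf⟩ := hDinv k le_rfl
      have ht1 : (T - (k + 1)) + 1 = T - k := by omega
      have ht2 : (T - (k + 1)) + 1 ≤ T := by omega
      have hAcard : (D k).ncard = (T - (k + 1)) + 1 := by omega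
      have hfA : minBasisWeight M w E₀ (D k) = stageLowerBound M w E₀ ((T - (k + 1)) + 1) := by
        rw [ht1]; exact hf
      obtain ⟨e, heD, hfe⟩ := crux hE₀ hbase (by omega) hsub hAcard hfA
      refine ⟨fun j => if j ≤ k then D j else D k \ {e}, by simp [hD0], ?_, ?_⟩
      · intro j hj
        by_cases h : j + 1 ≤ k
        · have h1 : j ≤ k := by omega
          simp only [if_pos h, if_pos h1]
          exact hDchain j (by omega)
        · have hjk : j = k := by omega
          subst hjk
          simp only [if_neg h, if_pos le_rfl]
          refine ⟨diff_subset, ?_⟩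
          rw [Set.diff_diff_cancel_left (singleton_subset_iff.2 heD), Set.ncard_singleton]
      · intro j hj
        by_cases h : j ≤ k
        · simp only [if_pos h]
          exact hDinv j h
        · have hjk : j = k + 1 := by omega
          simp only [if_neg h]
          subst hjk
          refine ⟨diff_subset.trans hsub, ?_, hfe⟩
          rw [Set.ncard_diff_singleton_of_mem heD, hcard]
          omega
  obtain ⟨D, hD0, hDchain, hDinv⟩ := hchain T le_rfl
  refine ⟨fun i => D (T - i), ?_, by simpa using hD0, ?_, ?_⟩
  · have := hDinv T le_rfl
    simp only [Nat.sub_self] at this ⊢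
    exact (Set.ncard_eq_zero (hRfin.subset this.1)).1 this.2.1
  · intro i hi1 hi2
    have h1 : T - (i - 1) = (T - i) + 1 := by omega
    have h2 : T - i < T := by omega
    show D (T - (i - 1)) ⊆ D (T - i) ∧ (D (T - i) \ D (T - (i - 1))).ncard = 1
    rw [h1]
    exact hDchain (T - i) h2
  · intro i hi
    have h1 : T - (T - i) = i := by omega
    have := (hDinv (T - i) (by omega)).2.2
    rwa [h1] at this
end

section
/- Single-element update of a minimum weight basis: let A ⊆ E \ E₀ and let X_A be a basis of M with X_A ⊆ E₀ ∪ A and w(X_A) = f(A). Let e ∈ E \ (E₀ ∪ A), let C be the unique circuit of M contained in X_A + e, and let e' be an element of C of maximum weight. Then X_A + e − e' is a basis of M contained in E₀ ∪ A + e with w(X_A + e − e') = f(A + e). -/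
open Set

variable {α : Type*}

/-- A circuit of a matroid is a minimal dependent set. -/
def IsCircuit (M : Matroid α) (C : Set α) : Prop :=
  M.Dep C ∧ ∀ D, D ⊂ C → ¬ M.Dep D

private lemma sw_insert (w : α → ℝ) {X : Set α} (hX : X.Finite) {a : α} (ha : a ∉ X) :
    setWeight w (insert a X) = w a + setWeight w X :=
  finsum_mem_insert w ha hX

private lemma sw_diff (w : α → ℝ) {X : Set α} (hX : X.Finite) {a : α} (ha : a ∈ X) :
    setWeight w (X \ {a}) = setWeight w X - w a := by
  have h1 : insert a (X \ {a}) = X := by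
    rw [insert_diff_singleton, insert_eq_of_mem ha]
  have h2 := sw_insert w (hX.diff (t := {a})) (fun h : a ∈ X \ {a} => h.2 rfl)
  rw [h1] at h2
  linarith

private lemma indep_base_of_ncard (M : Matroid α) [M.Finite] {I B : Set α}
    (hI : M.Indep I) (hB : M.IsBase B) (hcard : I.ncard = B.ncard) : M.IsBase I := by
  obtain ⟨B', hB', hIB'⟩ := hI.exists_isBase_superset
  have hfin : B'.Finite := M.ground_finite.subset hB'.subset_ground
  have hle : B'.ncard ≤ I.ncard := by
    rw [hcard, hB'.ncard_eq_ncard_of_isBase hB]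
  rw [Set.eq_of_subset_of_ncard_le hIB' hle hfin]
  exact hB'

private lemma circuit_mem_closure {M : Matroid α} {C : Set α} (hC : IsCircuit M C) {x : α}
    (hx : x ∈ C) : x ∈ M.closure (C \ {x}) := by
  have hCE : C ⊆ M.E := hC.1.subset_ground
  have hind : M.Indep (C \ {x}) := by
    by_contra h
    exact hC.2 _ (sdiff_singleton_ssubset.mpr hx) ⟨h, diff_subset.trans hCE⟩
  rw [hind.mem_closure_iff_of_notMem (fun h : x ∈ C \ {x} => h.2 rfl),
    insert_diff_singleton, insert_eq_of_mem hx]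
  exact hC.1

/-- Single-element update of a minimum weight basis: if `X_A` is a minimum weight
basis of `M` contained in `E₀ ∪ A`, `e ∈ E \ (E₀ ∪ A)`, `C` is the (unique) circuit
contained in `X_A + e`, and `e'` is a maximum weight element of `C`, then
`X_A + e - e'` is a minimum weight basis of `M` contained in `E₀ ∪ A + e`. -/
theorem min_basis_single_element_update (M : Matroid α) [M.Finite] (w : α → ℝ)
    (E₀ : Set α) (hE₀ : E₀ ⊆ M.E) (hbase : ∃ B, M.IsBase B ∧ B ⊆ E₀)
    (A : Set α) (hA : A ⊆ M.E \ E₀)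
    (XA : Set α) (hXA : M.IsBase XA) (hXAsub : XA ⊆ E₀ ∪ A)
    (hXAmin : setWeight w XA = minBasisWeight M w E₀ A)
    (e : α) (he : e ∈ M.E \ (E₀ ∪ A))
    (C : Set α) (hC : IsCircuit M C) (hCsub : C ⊆ insert e XA)
    (e' : α) (he'C : e' ∈ C) (he'max : ∀ x ∈ C, w x ≤ w e') :
    M.IsBase (insert e XA \ {e'}) ∧ insert e XA \ {e'} ⊆ E₀ ∪ insert e A ∧
      setWeight w (insert e XA \ {e'}) = minBasisWeight M w E₀ (insert e A) := by
  have hME : M.E.Finite := M.ground_finite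
  have hXAfin : XA.Finite := hME.subset hXA.subset_ground
  have heXA : e ∉ XA := fun h => he.2 (hXAsub h)
  have heC : e ∈ C := by
    by_contra h
    have hsub : C ⊆ XA := fun x hx =>
      ((hCsub hx).resolve_left (fun hxe => h (hxe ▸ hx)))
    exact hC.1.1 (hXA.indep.subset hsub)
  set D := insert e XA \ {e'} with hD
  have he'iXA : e' ∈ insert e XA := hCsub he'C
  -- weight of D
  have hwD : setWeight w D = setWeight w XA + w e - w e' := by
    rw [hD, sw_diff w (hXAfin.insert e) he'iXA, sw_insert w hXAfin heXA]
    ring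
  -- D is a base
  have hDbase : M.IsBase D := by
    rcases eq_or_ne e' e with rfl | hne
    · rwa [hD, insert_diff_self_of_notMem heXA]
    have he'XA : e' ∈ XA := he'iXA.resolve_left hne
    have hDE : D ⊆ M.E := diff_subset.trans (insert_subset he.1 hXA.subset_ground)
    have hCD : C \ {e'} ⊆ D := diff_subset_diff_left hCsub
    have he'cl : e' ∈ M.closure D :=
      M.closure_subset_closure hCD (circuit_mem_closure hC he'C)
    have hXAcl : XA ⊆ M.closure D := by
      intro x hx
      rcases eq_or_ne x e' with rfl | hxe
      · exact he'cl
      · exact M.subset_closure D hDE ⟨Or.inr hx, hxe⟩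
    have hsp : M.closure D = M.E := by
      refine subset_antisymm (M.closure_subset_ground D) ?_
      have h1 := M.closure_subset_closure_of_subset_closure hXAcl
      rwa [hXA.closure_eq] at h1
    obtain ⟨B, hB, hBD⟩ := ((M.spanning_iff_closure_eq hDE).mpr hsp).exists_isBase_subset
    have hDcard : D.ncard = XA.ncard := by
      rw [hD, ncard_diff_singleton_of_mem he'iXA,
        ncard_insert_of_notMem heXA hXAfin]
      omega
    have hBcard : XA.ncard ≤ B.ncard := (hB.ncard_eq_ncard_of_isBase hXA).ge
    have : B = D :=
      Set.eq_of_subset_of_ncard_le hBD (hDcard ▸ hBcard) (hME.subset hDE)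
    rwa [← this]
  -- D has right support
  have hDsub : D ⊆ E₀ ∪ insert e A := by
    rintro x ⟨hx, -⟩
    rcases hx with rfl | hxXA
    · exact Or.inr (mem_insert x A)
    · rcases hXAsub hxXA with h | h
      · exact Or.inl h
      · exact Or.inr (mem_insert_of_mem e h)
  -- finiteness of weight sets
  have hSfin : ∀ B : Set α,
      ({r : ℝ | ∃ X, M.IsBase X ∧ X ⊆ E₀ ∪ B ∧ setWeight w X = r}).Finite := by
    intro B
    refine ((hME.finite_subsets).image (setWeight w)).subset ?_
    rintro r ⟨X, hX, -, rfl⟩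
    exact ⟨X, hX.subset_ground, rfl⟩
  have hfA_le : ∀ Y, M.IsBase Y → Y ⊆ E₀ ∪ A → setWeight w XA ≤ setWeight w Y := by
    intro Y hY hYsub
    rw [hXAmin, minBasisWeight]
    exact csInf_le (hSfin A).bddBelow ⟨Y, hY, hYsub, rfl⟩
  have hwee' : w e ≤ w e' := he'max e heC
  -- key bound
  have hkey : ∀ Y, M.IsBase Y → Y ⊆ E₀ ∪ insert e A → setWeight w D ≤ setWeight w Y := by
    intro Y hY hYsub
    have hYfin : Y.Finite := hME.subset hY.subset_ground
    by_cases heY : e ∈ Y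
    · -- exchange with an element of C
      have hYe : M.Indep (Y \ {e}) := hY.indep.subset diff_subset
      have hnot : ¬ (C \ {e} ⊆ M.closure (Y \ {e})) := by
        intro hsub
        have h1 : M.closure (C \ {e}) ⊆ M.closure (Y \ {e}) :=
          M.closure_subset_closure_of_subset_closure hsub
        exact hY.indep.notMem_closure_diff_of_mem heY (h1 (circuit_mem_closure hC heC))
      obtain ⟨g, hgC, hgcl⟩ := not_subset.mp hnot
      have hgE : g ∈ M.E := hC.1.subset_ground hgC.1
      have hgXA : g ∈ XA := (hCsub hgC.1).resolve_left hgC.2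
      obtain ⟨hY'i, hgYe⟩ := (hYe.notMem_closure_iff hgE).mp hgcl
      have hY'base : M.IsBase (insert g (Y \ {e})) := by
        refine indep_base_of_ncard M hY'i hY ?_
        rw [ncard_insert_of_notMem hgYe (hYfin.diff (t := {e})),
          ncard_diff_singleton_of_mem heY]
        have : 0 < Y.ncard := (Set.ncard_pos hYfin).mpr ⟨e, heY⟩
        omega
      have hY'sub : insert g (Y \ {e}) ⊆ E₀ ∪ A := by
        rintro x (rfl | ⟨hxY, hxe⟩)
        · rcases hXAsub hgXA with h | h
          · exact Or.inl h
          · exact Or.inr h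
        · rcases hYsub hxY with h | h
          · exact Or.inl h
          · exact Or.inr (h.resolve_left hxe)
      have h1 := hfA_le _ hY'base hY'sub
      have h2 : setWeight w (insert g (Y \ {e})) =
          w g + (setWeight w Y - w e) := by
        rw [sw_insert w (hYfin.diff (t := {e})) hgYe, sw_diff w hYfin heY]
      have h3 : w g ≤ w e' := he'max g hgC.1
      rw [h2] at h1
      linarith
    · -- Y avoids e, so it lives in E₀ ∪ A
      have hYA : Y ⊆ E₀ ∪ A := by
        intro x hx
        rcases hYsub hx with h | h
        · exact Or.inl h
        · exact Or.inr (h.resolve_left (fun hxe => heY (hxe ▸ hx)))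
      have h1 := hfA_le Y hY hYA
      linarith
  refine ⟨hDbase, hDsub, le_antisymm ?_ ?_⟩
  · rw [minBasisWeight]
    refine le_csInf ⟨setWeight w D, D, hDbase, hDsub, rfl⟩ ?_
    rintro r ⟨Y, hY, hYsub, rfl⟩
    exact hkey Y hY hYsub
  · rw [minBasisWeight]
    exact csInf_le (hSfin (insert e A)).bddBelow ⟨D, hDbase, hDsub, rfl⟩
end

section
/- Extension property of optimal sets: let k ≥ 0 and suppose F_{k+1} < F_k. Let A, B ⊆ E \ E₀ with |A| = k, |B| = k+1, f(A) = F_k, and f(B) = F_{k+1}. Then there exists an element e ∈ B \ A such that f(A + e) = F_{k+1}. -/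
open Set

variable {α : Type*}

private lemma setWeight_insert (w : α → ℝ) {X : Set α} (hX : X.Finite) {e : α} (he : e ∉ X) :
    setWeight w (insert e X) = w e + setWeight w X :=
  finsum_mem_insert w he hX

private lemma setWeight_remove (w : α → ℝ) {X : Set α} (hX : X.Finite) {x : α} (hx : x ∈ X) :
    setWeight w (X \ {x}) = setWeight w X - w x := by
  have h : setWeight w (insert x (X \ {x})) = w x + setWeight w (X \ {x}) :=
    finsum_mem_insert w (fun h => h.2 rfl) (hX.diff)
  rw [Set.insert_diff_singleton, Set.insert_eq_of_mem hx] at h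
  linarith

private lemma minBasis_sets_finite (M : Matroid α) [M.Finite] (w : α → ℝ) (E₀ A : Set α) :
    {r : ℝ | ∃ X, M.IsBase X ∧ X ⊆ E₀ ∪ A ∧ setWeight w X = r}.Finite := by
  apply (M.ground_finite.finite_subsets.image (setWeight w)).subset
  rintro r ⟨X, hX, -, rfl⟩
  exact ⟨X, hX.subset_ground, rfl⟩

private lemma minBasisWeight_le' (M : Matroid α) [M.Finite] (w : α → ℝ) (E₀ : Set α)
    {A X : Set α} (hX : M.IsBase X) (hXA : X ⊆ E₀ ∪ A) :
    minBasisWeight M w E₀ A ≤ setWeight w X :=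
  csInf_le (minBasis_sets_finite M w E₀ A).bddBelow ⟨X, hX, hXA, rfl⟩

private lemma exists_minBasis (M : Matroid α) [M.Finite] (w : α → ℝ) (E₀ : Set α)
    (hbase : ∃ B, M.IsBase B ∧ B ⊆ E₀) (A : Set α) :
    ∃ X, M.IsBase X ∧ X ⊆ E₀ ∪ A ∧ setWeight w X = minBasisWeight M w E₀ A := by
  obtain ⟨B₀, hB₀, hB₀E⟩ := hbase
  have hne : {r : ℝ | ∃ X, M.IsBase X ∧ X ⊆ E₀ ∪ A ∧ setWeight w X = r}.Nonempty :=
    ⟨setWeight w B₀, B₀, hB₀, hB₀E.trans subset_union_left, rfl⟩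
  exact hne.csInf_mem (minBasis_sets_finite M w E₀ A)

private lemma stage_sets_finite (M : Matroid α) [M.Finite] (w : α → ℝ) (E₀ : Set α) (t : ℕ) :
    {r : ℝ | ∃ A, A ⊆ M.E \ E₀ ∧ A.ncard = t ∧ minBasisWeight M w E₀ A = r}.Finite := by
  apply (((M.ground_finite.diff (t := E₀)).finite_subsets).image (minBasisWeight M w E₀)).subset
  rintro r ⟨A, hA, -, rfl⟩
  exact ⟨A, hA, rfl⟩

private lemma stageLowerBound_le' (M : Matroid α) [M.Finite] (w : α → ℝ) (E₀ : Set α)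
    {A : Set α} {t : ℕ} (hA : A ⊆ M.E \ E₀) (hc : A.ncard = t) :
    stageLowerBound M w E₀ t ≤ minBasisWeight M w E₀ A :=
  csInf_le (stage_sets_finite M w E₀ t).bddBelow ⟨A, hA, hc, rfl⟩

/-- Symmetric basis exchange. -/
private lemma symm_exchange (M : Matroid α) [M.Finite] {X Y : Set α} (hX : M.IsBase X)
    (hY : M.IsBase Y) {e : α} (heY : e ∈ Y) (heX : e ∉ X) :
    ∃ x ∈ X, x ∉ Y ∧ M.IsBase (insert e (X \ {x})) ∧ M.IsBase (insert x (Y \ {e})) := by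
  have hXfin : X.Finite := M.ground_finite.subset hX.subset_ground
  have hYe : M.Indep (Y \ {e}) := hY.indep.subset diff_subset
  have hecl : e ∉ M.closure (Y \ {e}) := hY.indep.notMem_closure_diff_of_mem heY
  have hJi : M.Indep (X ∩ M.closure (Y \ {e})) := hX.indep.subset inter_subset_left
  have heJ : M.Indep (insert e (X ∩ M.closure (Y \ {e}))) := by
    rw [hJi.insert_indep_iff_of_notMem (fun h => heX h.1)]
    exact ⟨hY.subset_ground heY,
      fun hmem => hecl (M.closure_subset_closure_of_subset_closure inter_subset_right hmem)⟩
  obtain ⟨Z, hZ, hsubZ, hZsub⟩ := heJ.exists_isBase_subset_union_isBase hX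
  have heZ : e ∈ Z := hsubZ (mem_insert _ _)
  have hZX : Z ⊆ insert e X := by
    refine hZsub.trans ?_
    intro t ht
    rcases ht with ht | ht
    · rcases ht with rfl | ht
      · exact mem_insert _ _
      · exact mem_insert_of_mem _ ht.1
    · exact mem_insert_of_mem _ ht
  obtain ⟨x, hxX, hxZ⟩ : ∃ x ∈ X, x ∉ Z := by
    by_contra h
    push_neg at h
    exact heX ((hX.eq_of_subset_isBase hZ h) ▸ heZ)
  have hxcl : x ∉ M.closure (Y \ {e}) := fun h => hxZ (hsubZ (mem_insert_of_mem _ ⟨hxX, h⟩))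
  have hxY : x ∉ Y := by
    intro h
    refine hxcl (M.subset_closure _ hYe.subset_ground ⟨h, ?_⟩)
    simp only [mem_singleton_iff]
    exact fun h1 => heX (h1 ▸ hxX)
  have hQ : M.IsBase (insert x (Y \ {e})) := by
    refine hY.exchange_isBase_of_indep hxY ?_
    rw [hYe.insert_indep_iff_of_notMem (fun h => hxY h.1)]
    exact ⟨hX.subset_ground hxX, hxcl⟩
  have hZeq : Z = insert e (X \ {x}) := by
    refine Set.Finite.eq_of_subset_of_encard_le' (hXfin.diff.insert e) ?_ ?_
    · intro t ht
      rcases hZX ht with rfl | htX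
      · exact mem_insert _ _
      · exact mem_insert_of_mem _ ⟨htX, fun h => hxZ (h ▸ ht)⟩
    · rw [encard_insert_of_notMem (fun h => heX h.1), encard_diff_singleton_add_one hxX,
        hZ.encard_eq_encard_of_isBase hX]
  exact ⟨x, hxX, hxY, hZeq ▸ hZ, hQ⟩

/-- Extension property of optimal sets: if `F_{k+1} < F_k`, `|A| = k`, `|B| = k+1`,
`f(A) = F_k` and `f(B) = F_{k+1}`, then there is `e ∈ B \ A` with `f(A + e) = F_{k+1}`. -/
theorem optimal_set_extension (M : Matroid α) [M.Finite] (w : α → ℝ) (E₀ : Set α)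
    (hE₀ : E₀ ⊆ M.E) (hbase : ∃ B, M.IsBase B ∧ B ⊆ E₀) (k : ℕ)
    (hFk : stageLowerBound M w E₀ (k + 1) < stageLowerBound M w E₀ k)
    (A B : Set α) (hA : A ⊆ M.E \ E₀) (hB : B ⊆ M.E \ E₀)
    (hAcard : A.ncard = k) (hBcard : B.ncard = k + 1)
    (hfA : minBasisWeight M w E₀ A = stageLowerBound M w E₀ k)
    (hfB : minBasisWeight M w E₀ B = stageLowerBound M w E₀ (k + 1)) :
    ∃ e ∈ B \ A, minBasisWeight M w E₀ (insert e A) = stageLowerBound M w E₀ (k + 1) := by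
  have hgroundfin := M.ground_finite
  have hAfin : A.Finite := hgroundfin.subset (hA.trans diff_subset)
  obtain ⟨X, hXb, hXs, hXw⟩ := exists_minBasis M w E₀ hbase A
  have hXfin : X.Finite := hgroundfin.subset hXb.subset_ground
  have hXwv : setWeight w X = stageLowerBound M w E₀ k := by rw [hXw, hfA]
  suffices H : ∀ n (C : Set α), (C \ A).ncard = n → C ⊆ M.E \ E₀ → C.ncard = k + 1 →
      minBasisWeight M w E₀ C = stageLowerBound M w E₀ (k + 1) →
      ∃ e ∈ C \ A, minBasisWeight M w E₀ (insert e A) = stageLowerBound M w E₀ (k + 1) by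
    exact H _ B rfl hB hBcard hfB
  intro n
  induction n using Nat.strong_induction_on with
  | _ n IH =>
    intro C hCn hC hCcard hfC
    obtain ⟨Y, hYb, hYs, hYw⟩ := exists_minBasis M w E₀ hbase C
    have hCfin : C.Finite := hgroundfin.subset (hC.trans diff_subset)
    have hYfin : Y.Finite := hgroundfin.subset hYb.subset_ground
    have hYwv : setWeight w Y = stageLowerBound M w E₀ (k + 1) := by rw [hYw, hfC]
    have hex : ∃ e, e ∈ C \ A ∧ e ∈ Y := by
      by_contra h
      push_neg at h
      have hYA : Y ⊆ E₀ ∪ A := by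
        intro y hy
        rcases hYs hy with h0 | h0
        · exact Or.inl h0
        · by_cases hyA : y ∈ A
          · exact Or.inr hyA
          · exact absurd hy (h y ⟨h0, hyA⟩)
      have hle := minBasisWeight_le' M w E₀ hYb hYA
      rw [hYwv, hfA] at hle
      exact absurd hFk (not_lt.mpr hle)
    obtain ⟨e, heCA, heY⟩ := hex
    have heC : e ∈ C := heCA.1
    have heA : e ∉ A := heCA.2
    have heE : e ∈ M.E \ E₀ := hC heC
    have heX : e ∉ X := by
      intro h
      rcases hXs h with h0 | h0
      · exact heE.2 h0
      · exact heA h0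
    obtain ⟨x, hxX, hxY, hPb, hQb⟩ := symm_exchange M hXb hYb heY heX
    have hxE : x ∈ E₀ ∨ x ∈ A := hXs hxX
    have hxe : x ≠ e := fun h => heX (h ▸ hxX)
    have hwP : setWeight w (insert e (X \ {x})) =
        stageLowerBound M w E₀ k - w x + w e := by
      rw [setWeight_insert w hXfin.diff (fun h => heX h.1),
        setWeight_remove w hXfin hxX, hXwv]
      ring
    have hwQ : setWeight w (insert x (Y \ {e})) =
        stageLowerBound M w E₀ (k + 1) - w e + w x := by
      rw [setWeight_insert w hYfin.diff (fun h => hxY h.1),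
        setWeight_remove w hYfin heY, hYwv]
      ring
    have hiA : insert e A ⊆ M.E \ E₀ := insert_subset heE hA
    have hiAcard : (insert e A).ncard = k + 1 := by
      rw [Set.ncard_insert_of_notMem heA hAfin, hAcard]
    have hFk1_le : stageLowerBound M w E₀ (k + 1) ≤ minBasisWeight M w E₀ (insert e A) :=
      stageLowerBound_le' M w E₀ hiA hiAcard
    have hP_le : minBasisWeight M w E₀ (insert e A) ≤ setWeight w (insert e (X \ {x})) := by
      refine minBasisWeight_le' M w E₀ hPb ?_
      intro t ht
      rcases mem_insert_iff.mp ht with rfl | ⟨htX, htx⟩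
      · exact Or.inr (mem_insert _ _)
      · rcases hXs htX with h | h
        · exact Or.inl h
        · exact Or.inr (mem_insert_of_mem _ h)
    by_cases hx1 : x ∈ E₀ ∨ x ∈ C
    · -- finishing case: Q ⊆ E₀ ∪ (C \ {e})
      have hQsub : insert x (Y \ {e}) ⊆ E₀ ∪ (C \ {e}) := by
        intro t ht
        rcases mem_insert_iff.mp ht with rfl | ⟨htY, hte⟩
        · rcases hx1 with h | h
          · exact Or.inl h
          · exact Or.inr ⟨h, by simpa using hxe⟩
        · rcases hYs htY with h | h
          · exact Or.inl h
          · exact Or.inr ⟨h, hte⟩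
      have hCe : C \ {e} ⊆ M.E \ E₀ := diff_subset.trans hC
      have hCecard : (C \ {e}).ncard = k := by
        rw [Set.ncard_diff_singleton_of_mem heC, hCcard]
        omega
      have h1 : stageLowerBound M w E₀ k ≤ setWeight w (insert x (Y \ {e})) :=
        (stageLowerBound_le' M w E₀ hCe hCecard).trans (minBasisWeight_le' M w E₀ hQb hQsub)
      rw [hwQ] at h1
      refine ⟨e, heCA, le_antisymm ?_ hFk1_le⟩
      refine hP_le.trans ?_
      rw [hwP]
      linarith
    · push_neg at hx1
      obtain ⟨hxE0, hxC⟩ := hx1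
      have hxA : x ∈ A := hxE.resolve_left hxE0
      have hA1 : insert e (A \ {x}) ⊆ M.E \ E₀ := insert_subset heE (diff_subset.trans hA)
      have hkpos : 0 < k := by
        rw [← hAcard]
        exact (Set.ncard_pos hAfin).mpr ⟨x, hxA⟩
      have hA1card : (insert e (A \ {x})).ncard = k := by
        rw [Set.ncard_insert_of_notMem (fun h => heA h.1) hAfin.diff,
          Set.ncard_diff_singleton_of_mem hxA, hAcard]
        omega
      have hPsub : insert e (X \ {x}) ⊆ E₀ ∪ insert e (A \ {x}) := by
        intro t ht
        rcases mem_insert_iff.mp ht with rfl | ⟨htX, htx⟩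
        · exact Or.inr (mem_insert _ _)
        · rcases hXs htX with h | h
          · exact Or.inl h
          · exact Or.inr (mem_insert_of_mem _ ⟨h, htx⟩)
      have h2 : stageLowerBound M w E₀ k ≤ setWeight w (insert e (X \ {x})) :=
        (stageLowerBound_le' M w E₀ hA1 hA1card).trans (minBasisWeight_le' M w E₀ hPb hPsub)
      rw [hwP] at h2
      have hB1 : insert x (C \ {e}) ⊆ M.E \ E₀ := insert_subset (hA hxA) (diff_subset.trans hC)
      have hB1card : (insert x (C \ {e})).ncard = k + 1 := by
        rw [Set.ncard_insert_of_notMem (fun h => hxC h.1) hCfin.diff,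
          Set.ncard_diff_singleton_of_mem heC, hCcard]
        omega
      have hQsub : insert x (Y \ {e}) ⊆ E₀ ∪ insert x (C \ {e}) := by
        intro t ht
        rcases mem_insert_iff.mp ht with rfl | ⟨htY, hte⟩
        · exact Or.inr (mem_insert _ _)
        · rcases hYs htY with h | h
          · exact Or.inl h
          · exact Or.inr (mem_insert_of_mem _ ⟨h, hte⟩)
      have h3 : stageLowerBound M w E₀ (k + 1) ≤ minBasisWeight M w E₀ (insert x (C \ {e})) :=
        stageLowerBound_le' M w E₀ hB1 hB1card
      have h4 : minBasisWeight M w E₀ (insert x (C \ {e})) ≤ setWeight w (insert x (Y \ {e})) :=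
        minBasisWeight_le' M w E₀ hQb hQsub
      rw [hwQ] at h4
      have hfB1 : minBasisWeight M w E₀ (insert x (C \ {e})) = stageLowerBound M w E₀ (k + 1) := by
        refine le_antisymm (h4.trans ?_) h3
        have := h3.trans h4
        linarith
      have hsetEq : insert x (C \ {e}) \ A = (C \ A) \ {e} := by
        ext t
        simp only [mem_insert_iff, mem_diff, mem_singleton_iff]
        constructor
        · rintro ⟨rfl | ⟨htC, hte⟩, htA⟩
          · exact absurd hxA htA
          · exact ⟨⟨htC, htA⟩, hte⟩
        · rintro ⟨⟨htC, htA⟩, hte⟩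
          exact ⟨Or.inr ⟨htC, hte⟩, htA⟩
      have hlt : (insert x (C \ {e}) \ A).ncard < n := by
        rw [hsetEq, Set.ncard_diff_singleton_of_mem heCA]
        have hpos : 0 < (C \ A).ncard := (Set.ncard_pos hCfin.diff).mpr ⟨e, heCA⟩
        omega
      obtain ⟨e', he', hres⟩ := IH _ hlt (insert x (C \ {e})) rfl hB1 hB1card hfB1
      refine ⟨e', ?_, hres⟩
      rw [hsetEq] at he'
      exact he'.1
end

section
/- If B ⊆ E \ E₀ with |B| = k+1 satisfies f(B) = F_{k+1} and F_{k+1} < F_k, then B is contained in every minimum weight basis of M contained in E₀ ∪ B; that is, every basis X of M with X ⊆ E₀ ∪ B and w(X) = f(B) satisfies B ⊆ X. -/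
open Set

variable {α : Type*}

/-- If `B ⊆ E \ E₀` with `|B| = k + 1` satisfies `f(B) = F_{k+1}` and `F_{k+1} < F_k`,
then `B` is contained in every minimum weight basis of `M` contained in `E₀ ∪ B`. -/
theorem optimal_set_in_every_min_basis (M : Matroid α) [M.Finite] (w : α → ℝ)
    (E₀ : Set α) (hE₀ : E₀ ⊆ M.E) (hbase : ∃ B, M.IsBase B ∧ B ⊆ E₀) (k : ℕ)
    (hFk : stageLowerBound M w E₀ (k + 1) < stageLowerBound M w E₀ k)
    (B : Set α) (hB : B ⊆ M.E \ E₀) (hBcard : B.ncard = k + 1)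
    (hfB : minBasisWeight M w E₀ B = stageLowerBound M w E₀ (k + 1))
    (X : Set α) (hX : M.IsBase X) (hXsub : X ⊆ E₀ ∪ B)
    (hXw : setWeight w X = minBasisWeight M w E₀ B) :
    B ⊆ X := by
  have hEfin : M.E.Finite := M.ground_finite
  have hfin1 : ∀ S : Set α,
      ({r : ℝ | ∃ X, M.IsBase X ∧ X ⊆ S ∧ setWeight w X = r}).Finite := by
    intro S
    have : {r : ℝ | ∃ X, M.IsBase X ∧ X ⊆ S ∧ setWeight w X = r} ⊆
        (setWeight w) '' {X | X ⊆ M.E} := by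
      rintro r ⟨X, hX, -, rfl⟩
      exact ⟨X, hX.subset_ground, rfl⟩
    exact ((hEfin.finite_subsets).image _).subset this
  have hfin2 : ({r : ℝ | ∃ A, A ⊆ M.E \ E₀ ∧ A.ncard = k ∧
      minBasisWeight M w E₀ A = r}).Finite := by
    have : {r : ℝ | ∃ A, A ⊆ M.E \ E₀ ∧ A.ncard = k ∧ minBasisWeight M w E₀ A = r} ⊆
        (minBasisWeight M w E₀) '' {A | A ⊆ M.E \ E₀} := by
      rintro r ⟨A, hA, -, rfl⟩
      exact ⟨A, hA, rfl⟩
    exact (((Set.Finite.diff hEfin : (M.E \ E₀).Finite).finite_subsets).image _).subset this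
  intro e he
  by_contra hex
  have hBfin : B.Finite := (Set.Finite.diff hEfin : (M.E \ E₀).Finite).subset hB
  set A := B \ {e} with hAdef
  have hA : A ⊆ M.E \ E₀ := (diff_subset).trans hB
  have hAcard : A.ncard = k := by
    rw [hAdef, Set.ncard_diff_singleton_of_mem he, hBcard]; rfl
  have hXA : X ⊆ E₀ ∪ A := by
    intro x hx
    rcases hXsub hx with h | h
    · exact Or.inl h
    · exact Or.inr ⟨h, fun hxe => hex (hxe ▸ hx)⟩
  have h1 : minBasisWeight M w E₀ A ≤ setWeight w X :=
    csInf_le (hfin1 _).bddBelow ⟨X, hX, hXA, rfl⟩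
  have h2 : stageLowerBound M w E₀ k ≤ minBasisWeight M w E₀ A :=
    csInf_le hfin2.bddBelow ⟨A, hA, hAcard, rfl⟩
  have := h2.trans (h1.trans_eq (hXw.trans hfB))
  exact absurd (this.trans_lt hFk) (lt_irrefl _)
end

section
/- Incremental network design with minimum spanning trees: the minimum of Σ_{i=0}^{T} f(A_i) over all sequences ∅ = A_0 ⊆ A_1 ⊆ ⋯ ⊆ A_T ⊆ E \ E₀ with |A_i \ A_{i-1}| = 1 for each i ∈ {1,…,T} equals Σ_{t=0}^{T} F_t. -/
open Set

variable {V : Type*}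

/-- The total weight of a set of edges. -/
noncomputable def edgeSetWeight (w : Sym2 V → ℝ) (X : Set (Sym2 V)) : ℝ := ∑ᶠ e ∈ X, w e

/-- `(V, X)` is a spanning tree of `G`. -/
def IsSpanningTreeEdgeSet (G : SimpleGraph V) (X : Set (Sym2 V)) : Prop :=
  X ⊆ G.edgeSet ∧ (SimpleGraph.fromEdgeSet X).IsTree

/-- `f(A)`: the minimum weight of a spanning tree of `G` using only edges of `E₀ ∪ A`. -/
noncomputable def minTreeWeight (G : SimpleGraph V) (w : Sym2 V → ℝ)
    (E₀ A : Set (Sym2 V)) : ℝ :=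
  sInf {r : ℝ | ∃ X, X ⊆ E₀ ∪ A ∧ IsSpanningTreeEdgeSet G X ∧ edgeSetWeight w X = r}

/-- `F t`: the minimum of `f(A)` over all `A ⊆ E \ E₀` with `|A| = t`. -/
noncomputable def treeStageLowerBound (G : SimpleGraph V) (w : Sym2 V → ℝ)
    (E₀ : Set (Sym2 V)) (t : ℕ) : ℝ :=
  sInf {r : ℝ | ∃ A, A ⊆ G.edgeSet \ E₀ ∧ A.ncard = t ∧ minTreeWeight G w E₀ A = r}


open SimpleGraph




/-- Reachability within an edge set. -/
def EConn (X : Set (Sym2 V)) (u v : V) : Prop := (SimpleGraph.fromEdgeSet X).Reachable u v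

lemma econn_refl (X : Set (Sym2 V)) (u : V) : EConn X u u := Reachable.refl u

lemma EConn.symm {X : Set (Sym2 V)} {u v : V} (h : EConn X u v) : EConn X v u := Reachable.symm h

lemma EConn.trans {X : Set (Sym2 V)} {u v z : V} (h : EConn X u v) (h' : EConn X v z) :
    EConn X u z := Reachable.trans h h'

lemma econn_mono {X Y : Set (Sym2 V)} (hXY : X ⊆ Y) {u v : V} (h : EConn X u v) : EConn Y u v :=
  Reachable.mono (fromEdgeSet_mono hXY) h

lemma econn_of_mem {X : Set (Sym2 V)} {u v : V} (h : s(u, v) ∈ X) (hne : u ≠ v) : EConn X u v :=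
  Adj.reachable (by rw [fromEdgeSet_adj]; exact ⟨h, hne⟩)

lemma edge_mem_of_mem_walk_edges {X : Set (Sym2 V)} {u v : V}
    {p : (fromEdgeSet X).Walk u v} {e : Sym2 V} (he : e ∈ p.edges) :
    e ∈ X ∧ ¬ e.IsDiag := by
  have := p.edges_subset_edgeSet he
  rw [edgeSet_fromEdgeSet] at this
  exact ⟨this.1, this.2⟩

/-- Rerouting: if the two endpoints of `a` are connected avoiding `a`, then deleting `a`
preserves all reachability. -/
lemma econn_delete_edge {X : Set (Sym2 V)} {a : Sym2 V} {x y : V} (hxy : a = s(x, y))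
    (hcon : EConn (X \ {a}) x y) : ∀ {u v : V}, EConn X u v → EConn (X \ {a}) u v := by
  intro u v h
  obtain ⟨p⟩ := h
  induction p with
  | nil => exact econn_refl _ _
  | cons hadj q ih =>
    rename_i c d e
    refine EConn.trans ?_ ih
    rw [fromEdgeSet_adj] at hadj
    by_cases hce : s(c, d) = a
    · rw [hxy, Sym2.eq_iff] at hce
      rcases hce with ⟨rfl, rfl⟩ | ⟨rfl, rfl⟩
      · exact hcon
      · exact hcon.symm
    · exact econn_of_mem ⟨hadj.1, hce⟩ hadj.2

/-- Auxiliary: propagate two-sided connectivity along a walk. -/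
lemma econn_delete_edge_cases_aux {X : Set (Sym2 V)} {a : Sym2 V} :
    ∀ {z zz : V} (_ : (fromEdgeSet X).Walk z zz) {x y : V}, a = s(x, y) →
      (EConn (X \ {a}) zz x ∨ EConn (X \ {a}) zz y) →
      EConn (X \ {a}) z x ∨ EConn (X \ {a}) z y := by
  intro z zz p
  induction p with
  | nil => intro x y _ h; exact h
  | cons hadj q ih =>
    rename_i c d e
    intro x y hxy h
    rw [fromEdgeSet_adj] at hadj
    by_cases hce : s(c, d) = a
    · rw [hxy, Sym2.eq_iff] at hce
      rcases hce with ⟨rfl, rfl⟩ | ⟨rfl, rfl⟩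
      · exact Or.inl (econn_refl _ _)
      · exact Or.inr (econn_refl _ _)
    · have hcd : EConn (X \ {a}) c d := econn_of_mem ⟨hadj.1, hce⟩ hadj.2
      rcases ih hxy h with h1 | h1
      · exact Or.inl (hcd.trans h1)
      · exact Or.inr (hcd.trans h1)

/-- Removing a tree edge leaves every vertex connected to one of its two endpoints. -/
lemma econn_delete_edge_cases {X : Set (Sym2 V)} {a : Sym2 V} {x y : V} (hxy : a = s(x, y))
    {z : V} (h : EConn X z x) : EConn (X \ {a}) z x ∨ EConn (X \ {a}) z y := by
  obtain ⟨p⟩ := h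
  exact econn_delete_edge_cases_aux p hxy (Or.inl (econn_refl _ _))

/-- Crossing lemma: a walk between two vertices separated w.r.t. `Y` contains a crossing edge. -/
lemma exists_crossing_edge {Z : Set (Sym2 V)} {u v : V} (p : (fromEdgeSet Z).Walk u v)
    {Y : Set (Sym2 V)} (h : ¬ EConn Y u v) :
    ∃ x y : V, s(x, y) ∈ p.edges ∧ EConn Y u x ∧ ¬ EConn Y u y := by
  induction p with
  | nil => exact absurd (econn_refl _ _) h
  | cons hadj q ih =>
    rename_i c d e
    by_cases hcd : EConn Y c d
    · have : ¬ EConn Y d e := fun hc => h (hcd.trans hc)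
      obtain ⟨x, y, hxy, h1, h2⟩ := ih this
      exact ⟨x, y, by simp [hxy], hcd.trans h1, fun hc => h2 (hcd.symm.trans hc)⟩
    · exact ⟨c, d, by simp, econn_refl _ _, hcd⟩

/-- Splitting a trail at an edge. -/
lemma trail_split {H : SimpleGraph V} : ∀ {u v : V} (p : H.Walk u v), p.edges.Nodup →
    ∀ {a : Sym2 V}, a ∈ p.edges →
    ∃ (x y : V) (q : H.Walk u x) (r : H.Walk y v), a = s(x, y) ∧ a ∉ q.edges ∧ a ∉ r.edges ∧
      (∀ e ∈ q.edges, e ∈ p.edges) ∧ (∀ e ∈ r.edges, e ∈ p.edges) := by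
  intro u v p
  induction p with
  | nil => intro _ a ha; simp at ha
  | cons hadj q ih =>
    rename_i c d e
    intro hnd a ha
    rw [Walk.edges_cons] at ha hnd
    rw [List.nodup_cons] at hnd
    rcases List.mem_cons.1 ha with rfl | ha'
    · exact ⟨c, d, Walk.nil, q, rfl, by simp, hnd.1, by simp, fun e he => by simp [he]⟩
    · obtain ⟨x, y, q', r', h1, h2, h3, h4, h5⟩ := ih hnd.2 ha'
      refine ⟨x, y, Walk.cons hadj q', r', h1, ?_, h3, ?_, fun e he => by simp [h5 e he]⟩
      · rw [Walk.edges_cons, List.mem_cons]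
        rintro (rfl | hc)
        · exact hnd.1 ha'
        · exact h2 hc
      · intro e he
        rw [Walk.edges_cons, List.mem_cons] at he ⊢
        rcases he with rfl | he
        · exact Or.inl rfl
        · exact Or.inr (h4 e he)

/-- Maximum of weights along a nonempty list. -/
lemma exists_list_max (w : Sym2 V → ℝ) : ∀ (l : List (Sym2 V)), l ≠ [] →
    ∃ μ, (∃ e ∈ l, μ = w e) ∧ ∀ e ∈ l, w e ≤ μ := by
  intro l
  induction l with
  | nil => simp
  | cons a l ih =>
    intro _
    rcases eq_or_ne l [] with rfl | hl
    · exact ⟨w a, ⟨a, by simp⟩, by simp⟩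
    · obtain ⟨μ, ⟨e, he, rfl⟩, hmax⟩ := ih hl
      rcases le_total (w a) (w e) with h | h
      · exact ⟨w e, ⟨e, by simp [he]⟩, by
          intro f hf; rcases List.mem_cons.1 hf with rfl | hf
          · exact h
          · exact hmax f hf⟩
      · exact ⟨w a, ⟨a, by simp⟩, by
          intro f hf; rcases List.mem_cons.1 hf with rfl | hf
          · exact le_rfl
          · exact (hmax f hf).trans h⟩

section Dev
variable (w : Sym2 V → ℝ)

/-- The edges of `X` of weight at most `lam`. -/
def levE (lam : ℝ) (X : Set (Sym2 V)) : Set (Sym2 V) := {e ∈ X | w e ≤ lam}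

/-- Connectivity at level `lam`. -/
def ConnL (lam : ℝ) (X : Set (Sym2 V)) (u v : V) : Prop := EConn (levE w lam X) u v

variable {w}

lemma levE_mono_level {lam lam' : ℝ} (h : lam ≤ lam') (X : Set (Sym2 V)) :
    levE w lam X ⊆ levE w lam' X := fun e he => ⟨he.1, he.2.trans h⟩

lemma levE_mono_set {X Y : Set (Sym2 V)} (h : X ⊆ Y) (lam : ℝ) :
    levE w lam X ⊆ levE w lam Y := fun e he => ⟨h he.1, he.2⟩

lemma levE_sdiff (lam : ℝ) (X : Set (Sym2 V)) (a : Sym2 V) :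
    levE w lam (X \ {a}) = levE w lam X \ {a} := by
  ext e; constructor
  · rintro ⟨⟨h1, h2⟩, h3⟩; exact ⟨⟨h1, h3⟩, h2⟩
  · rintro ⟨⟨h1, h3⟩, h2⟩; exact ⟨⟨h1, h2⟩, h3⟩

lemma levE_subset (lam : ℝ) (X : Set (Sym2 V)) : levE w lam X ⊆ X := fun _ he => he.1

lemma walk_edges_ne_nil {H : SimpleGraph V} {u v : V} (p : H.Walk u v) (hne : u ≠ v) :
    p.edges ≠ [] := by
  cases p with
  | nil => exact absurd rfl hne
  | cons h q => simp

/-- Transfer a walk whose edges all have weight `≤ lam` to the level graph. -/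
lemma connL_of_walk {Y X : Set (Sym2 V)} (hYX : Y ⊆ X) {u v : V}
    (p : (fromEdgeSet Y).Walk u v) {lam : ℝ}
    (hb : ∀ e ∈ p.edges, w e ≤ lam) : ConnL w lam X u v := by
  refine ⟨p.transfer _ fun e he => ?_⟩
  obtain ⟨h1, h2⟩ := edge_mem_of_mem_walk_edges he
  rw [edgeSet_fromEdgeSet]
  exact ⟨⟨hYX h1, hb e he⟩, h2⟩

/-- Reduce a connection at any level to one at the weight of one of the edges of `X`. -/
lemma connL_reduce {X : Set (Sym2 V)} {u v : V} (hne : u ≠ v) {lam : ℝ}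
    (h : ConnL w lam X u v) :
    ∃ μ, (∃ e ∈ X, w e = μ) ∧ μ ≤ lam ∧ ConnL w μ X u v := by
  obtain ⟨p⟩ := h
  obtain ⟨μ, ⟨e, he, rfl⟩, hmax⟩ := exists_list_max w p.edges (walk_edges_ne_nil p hne)
  have heX : e ∈ levE w lam X := (edge_mem_of_mem_walk_edges he).1
  exact ⟨w e, ⟨e, heX.1, rfl⟩, heX.2, connL_of_walk (levE_subset lam X) p hmax⟩

/-- Any connection happens at some finite level. -/
lemma connL_of_econn {X : Set (Sym2 V)} {u v : V} (hne : u ≠ v) (h : EConn X u v) :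
    ∃ lam, ConnL w lam X u v := by
  obtain ⟨p⟩ := h
  obtain ⟨μ, _, hmax⟩ := exists_list_max w p.edges (walk_edges_ne_nil p hne)
  exact ⟨μ, connL_of_walk subset_rfl p hmax⟩

/-- Existence of a minimal connection threshold. -/
lemma exists_min_level {X : Set (Sym2 V)} (hX : X.Finite) {u v : V} (hne : u ≠ v)
    (h : EConn X u v) :
    ∃ β, ConnL w β X u v ∧ ∀ lam, ConnL w lam X u v → β ≤ lam := by
  classical
  set M : Set ℝ := {μ | (∃ e ∈ X, w e = μ) ∧ ConnL w μ X u v} with hM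
  have hMfin : M.Finite := (hX.image w).subset (by rintro μ ⟨⟨e, he, rfl⟩, -⟩; exact ⟨e, he, rfl⟩)
  have hMne : M.Nonempty := by
    obtain ⟨lam, hlam⟩ := connL_of_econn hne h
    obtain ⟨μ, h1, _, h3⟩ := connL_reduce hne hlam
    exact ⟨μ, h1, h3⟩
  obtain ⟨β, hβM, hβmin⟩ := Set.exists_min_image M id hMfin hMne
  refine ⟨β, hβM.2, fun lam hlam => ?_⟩
  obtain ⟨μ, h1, h2, h3⟩ := connL_reduce hne hlam
  exact (hβmin μ ⟨h1, h3⟩).trans h2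

-- ============ trees ==================

lemma tree_ncard [Fintype V] {X : Set (Sym2 V)} (hd : ∀ e ∈ X, ¬ e.IsDiag)
    (ht : (fromEdgeSet X).IsTree) : X.ncard + 1 = Fintype.card V := by
  classical
  have hfin : Fintype (fromEdgeSet X).edgeSet := (Set.toFinite _).fintype
  have hcard := ht.card_edgeFinset
  have hXd : (fromEdgeSet X).edgeSet = X := by
    rw [edgeSet_fromEdgeSet]
    ext e; exact ⟨fun h => h.1, fun h => ⟨h, hd e h⟩⟩
  rw [← hcard]
  congr 1
  rw [Set.ncard_eq_toFinset_card' X]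
  have : (fromEdgeSet X).edgeFinset = X.toFinset := by
    ext e; simp [edgeFinset, hXd]
  rw [← this]

/-- If no edge can be removed, a connected edge set is a tree. -/
lemma tree_of_no_removable {X : Set (Sym2 V)} (hd : ∀ e ∈ X, ¬ e.IsDiag)
    (hc : (fromEdgeSet X).Connected)
    (hbr : ∀ a ∈ X, ∀ x y : V, a = s(x, y) → ¬ EConn (X \ {a}) x y) :
    (fromEdgeSet X).IsTree := by
  refine ⟨hc, ?_⟩
  rw [isAcyclic_iff_forall_edge_isBridge]
  intro e he
  rw [edgeSet_fromEdgeSet] at he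
  induction e with
  | _ x y =>
    have hxy : x ≠ y := fun hc' => he.2 (by simp [hc'])
    rw [isBridge_iff]
    · rw [deleteEdges_fromEdgeSet]
      exact hbr _ he.1 x y rfl

lemma exists_spanning_tree_aux [Fintype V] :
    ∀ (n : ℕ) (X : Set (Sym2 V)), X.ncard ≤ n → (∀ e ∈ X, ¬ e.IsDiag) →
      (fromEdgeSet X).Connected → ∃ Y ⊆ X, (fromEdgeSet Y).IsTree := by
  intro n
  induction n with
  | zero =>
    intro X hn hd hc
    refine ⟨X, subset_rfl, tree_of_no_removable hd hc ?_⟩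
    intro a ha
    have : X = ∅ := by
      have := Set.ncard_eq_zero (Set.toFinite X) |>.1 (Nat.le_zero.1 hn)
      exact this
    rw [this] at ha; exact absurd ha (Set.notMem_empty a)
  | succ n ih =>
    intro X hn hd hc
    by_cases hbr : ∃ a ∈ X, ∃ x y : V, a = s(x, y) ∧ EConn (X \ {a}) x y
    · obtain ⟨a, ha, x, y, hxy, hcon⟩ := hbr
      have hc' : (fromEdgeSet (X \ {a})).Connected := by
        haveI := hc.nonempty
        exact Connected.mk fun u v => econn_delete_edge hxy hcon (hc.preconnected u v)
      have hlt : (X \ {a}).ncard ≤ n := by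
        have := Set.ncard_lt_ncard (⟨diff_subset, fun hcc => (hcc ha).2 rfl⟩ :
          X \ {a} ⊂ X) (Set.toFinite X)
        omega
      obtain ⟨Y, hY1, hY2⟩ := ih (X \ {a}) hlt (fun e he => hd e he.1) hc'
      exact ⟨Y, hY1.trans diff_subset, hY2⟩
    · push_neg at hbr
      exact ⟨X, subset_rfl, tree_of_no_removable hd hc hbr⟩

lemma exists_spanning_tree' [Fintype V] {X : Set (Sym2 V)} (hd : ∀ e ∈ X, ¬ e.IsDiag)
    (hc : (fromEdgeSet X).Connected) : ∃ Y ⊆ X, (fromEdgeSet Y).IsTree :=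
  exists_spanning_tree_aux X.ncard X le_rfl hd hc

lemma connected_card_le [Fintype V] {X : Set (Sym2 V)} (hd : ∀ e ∈ X, ¬ e.IsDiag)
    (hc : (fromEdgeSet X).Connected) : Fintype.card V ≤ X.ncard + 1 := by
  obtain ⟨Y, hYX, hY⟩ := exists_spanning_tree' hd hc
  rw [← tree_ncard (fun e he => hd e (hYX he)) hY]
  have := Set.ncard_le_ncard hYX (Set.toFinite X)
  omega

lemma tree_recognition [Fintype V] {X : Set (Sym2 V)} (hd : ∀ e ∈ X, ¬ e.IsDiag)
    (hc : (fromEdgeSet X).Connected) (hcard : X.ncard + 1 = Fintype.card V) :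
    (fromEdgeSet X).IsTree := by
  obtain ⟨Y, hYX, hY⟩ := exists_spanning_tree' hd hc
  have hYcard := tree_ncard (fun e he => hd e (hYX he)) hY
  have : Y = X := Set.eq_of_subset_of_ncard_le hYX (by omega) (Set.toFinite X)
  rwa [← this]


-- ================= weights =================

lemma weight_union_singleton {w : Sym2 V → ℝ} {Y : Set (Sym2 V)} (hY : Y.Finite) {b : Sym2 V}
    (hb : b ∉ Y) : edgeSetWeight w (Y ∪ {b}) = edgeSetWeight w Y + w b := by
  unfold edgeSetWeight
  rw [finsum_mem_union (by simpa using hb) hY (Set.finite_singleton b), finsum_mem_singleton]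

lemma weight_sdiff_singleton {w : Sym2 V → ℝ} {X : Set (Sym2 V)} (hX : X.Finite) {g : Sym2 V}
    (hg : g ∈ X) : edgeSetWeight w (X \ {g}) = edgeSetWeight w X - w g := by
  have h1 : (X \ {g}) ∪ {g} = X := by
    rw [Set.diff_union_self, Set.union_eq_self_of_subset_right (by simpa using hg)]
  have h2 := weight_union_singleton (w := w) (Y := X \ {g}) (hX.subset diff_subset)
    (b := g) (fun hcc => hcc.2 rfl)
  rw [h1] at h2
  linarith

-- ================= minimum spanning tree weight =================

/-- Helper: build reachability from a walk whose edges satisfy a membership condition. -/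
lemma econn_of_walk_subset {Y Z : Set (Sym2 V)} {u v : V} (p : (fromEdgeSet Y).Walk u v)
    (h : ∀ e ∈ p.edges, e ∈ Z) : EConn Z u v := by
  refine ⟨p.transfer _ fun e he => ?_⟩
  rw [edgeSet_fromEdgeSet]
  exact ⟨h e he, (edge_mem_of_mem_walk_edges he).2⟩

variable {G : SimpleGraph V}

/-- The minimum spanning tree weight over an edge set. -/
noncomputable def mtw (G : SimpleGraph V) (w : Sym2 V → ℝ) (S : Set (Sym2 V)) : ℝ :=
  sInf {r : ℝ | ∃ X, X ⊆ S ∧ IsSpanningTreeEdgeSet G X ∧ edgeSetWeight w X = r}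

lemma minTreeWeight_eq_mtw (G : SimpleGraph V) (w : Sym2 V → ℝ) (E₀ A : Set (Sym2 V)) :
    minTreeWeight G w E₀ A = mtw G w (E₀ ∪ A) := rfl

lemma nondiag_of_subset_edgeSet {S : Set (Sym2 V)} (hS : S ⊆ G.edgeSet) :
    ∀ e ∈ S, ¬ e.IsDiag := fun e he => (G.not_isDiag_of_mem_edgeSet (hS he))

lemma exists_sp_tree [Fintype V] {S : Set (Sym2 V)} (hS : S ⊆ G.edgeSet)
    (hSc : (fromEdgeSet S).Connected) :
    ∃ X, X ⊆ S ∧ IsSpanningTreeEdgeSet G X ∧ edgeSetWeight w X = edgeSetWeight w X := by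
  obtain ⟨Y, hY1, hY2⟩ := exists_spanning_tree' (nondiag_of_subset_edgeSet hS) hSc
  exact ⟨Y, hY1, ⟨hY1.trans hS, hY2⟩, rfl⟩

lemma mtwSet_finite [Fintype V] (w : Sym2 V → ℝ) (S : Set (Sym2 V)) :
    {r : ℝ | ∃ X, X ⊆ S ∧ IsSpanningTreeEdgeSet G X ∧ edgeSetWeight w X = r}.Finite := by
  have hsub : {r : ℝ | ∃ X, X ⊆ S ∧ IsSpanningTreeEdgeSet G X ∧ edgeSetWeight w X = r} ⊆
      (edgeSetWeight w) '' {X | X ⊆ S} := by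
    rintro r ⟨X, h1, _, rfl⟩
    exact ⟨X, h1, rfl⟩
  exact ((Set.toFinite _).image _).subset hsub

lemma mtw_le [Fintype V] {w : Sym2 V → ℝ} {S X : Set (Sym2 V)} (h1 : X ⊆ S)
    (h2 : IsSpanningTreeEdgeSet G X) : mtw G w S ≤ edgeSetWeight w X :=
  csInf_le (mtwSet_finite w S).bddBelow ⟨X, h1, h2, rfl⟩

lemma mtw_attained [Fintype V] {w : Sym2 V → ℝ} {S : Set (Sym2 V)} (hS : S ⊆ G.edgeSet)
    (hSc : (fromEdgeSet S).Connected) :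
    ∃ X, X ⊆ S ∧ IsSpanningTreeEdgeSet G X ∧ edgeSetWeight w X = mtw G w S := by
  have hne : {r : ℝ | ∃ X, X ⊆ S ∧ IsSpanningTreeEdgeSet G X ∧ edgeSetWeight w X = r}.Nonempty := by
    obtain ⟨X, h1, h2, _⟩ := exists_sp_tree (w := w) hS hSc
    exact ⟨edgeSetWeight w X, X, h1, h2, rfl⟩
  obtain ⟨X, h1, h2, h3⟩ := hne.csInf_mem (mtwSet_finite w S)
  exact ⟨X, h1, h2, h3⟩

lemma mtw_mono [Fintype V] {w : Sym2 V → ℝ} {S S' : Set (Sym2 V)} (hS : S ⊆ G.edgeSet)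
    (hSc : (fromEdgeSet S).Connected) (hsub : S ⊆ S') : mtw G w S' ≤ mtw G w S := by
  refine csInf_le_csInf (mtwSet_finite w S').bddBelow ?_ ?_
  · obtain ⟨X, h1, h2, _⟩ := exists_sp_tree (w := w) hS hSc
    exact ⟨edgeSetWeight w X, X, h1, h2, rfl⟩
  · rintro r ⟨X, h1, h2, rfl⟩
    exact ⟨X, h1.trans hsub, h2, rfl⟩

/-- Swapping an edge of a spanning tree for another edge reconnecting the two sides
yields a spanning tree. -/
lemma swap_tree [Fintype V] {T : Set (Sym2 V)} (hTe : T ⊆ G.edgeSet)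
    (ht : (fromEdgeSet T).IsTree) {g c : Sym2 V} (hg : g ∈ T) (hc : c ∉ T)
    (hce : c ∈ G.edgeSet) {x y : V} (hgxy : g = s(x, y))
    (hconn : EConn ((T \ {g}) ∪ {c}) x y) :
    IsSpanningTreeEdgeSet G ((T \ {g}) ∪ {c}) := by
  have hcg : c ≠ g := fun h => hc (h ▸ hg)
  have hset : (T ∪ {c}) \ {g} = (T \ {g}) ∪ {c} := by
    rw [Set.union_diff_distrib]
    congr 1
    simp [hcg]
  have hsub : (T \ {g}) ∪ {c} ⊆ G.edgeSet := by
    rintro e (he | he)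
    · exact hTe he.1
    · simpa using (by simp at he; exact he ▸ hce)
  refine ⟨hsub, tree_recognition (nondiag_of_subset_edgeSet hsub) ?_ ?_⟩
  · haveI := (SimpleGraph.IsTree.isConnected ht).nonempty
    refine Connected.mk fun z z' => ?_
    have h1 : EConn (T ∪ {c}) z z' :=
      econn_mono subset_union_left ((SimpleGraph.IsTree.isConnected ht).preconnected z z')
    have h2 := econn_delete_edge (X := T ∪ {c}) hgxy (by rwa [hset]) h1
    rwa [hset] at h2
  · have h1 : ((T \ {g}) ∪ {c}).ncard = T.ncard := by
      rw [Set.union_singleton, Set.ncard_insert_of_notMem (by simp [hcg, hc])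
        ((Set.toFinite _)), ← Set.ncard_diff_singleton_add_one hg (Set.toFinite T)]
    rw [h1]
    exact tree_ncard (nondiag_of_subset_edgeSet hTe) ht

-- ================= the two exchange inequalities =================

/-- Adding an available edge decreases the MST weight by at least `lam - w b` for the minimal
connection level `lam`. -/
lemma mtw_drop_ge [Fintype V] {w : Sym2 V → ℝ} {S : Set (Sym2 V)} (hS : S ⊆ G.edgeSet)
    (hSc : (fromEdgeSet S).Connected) {u v : V} (hne : u ≠ v) (hbe : s(u, v) ∈ G.edgeSet)
    (hbS : s(u, v) ∉ S) :
    ∃ lam, w s(u, v) ≤ lam ∧ ConnL w lam S u v ∧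
      mtw G w (S ∪ {s(u, v)}) ≤ mtw G w S - (lam - w s(u, v)) := by
  classical
  obtain ⟨β, hβc, hβmin⟩ := exists_min_level (Set.toFinite S) hne (hSc.preconnected u v)
  rcases le_or_gt β (w s(u, v)) with hcase | hcase
  · refine ⟨w s(u, v), le_rfl, econn_mono (levE_mono_level hcase S) hβc, ?_⟩
    have := mtw_mono (w := w) hS hSc (subset_union_left : S ⊆ S ∪ {s(u, v)})
    linarith
  · refine ⟨β, hcase.le, hβc, ?_⟩
    obtain ⟨T, hT1, hT2, hT3⟩ := mtw_attained (w := w) hS hSc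
    have hTc := SimpleGraph.IsTree.isConnected hT2.2
    obtain ⟨p0⟩ := hTc.preconnected u v
    set p := p0.toPath with hp
    obtain ⟨μ, ⟨g, hgp, hμ⟩, hmax⟩ := exists_list_max w p.1.edges (walk_edges_ne_nil p.1 hne)
    have hβμ : β ≤ μ := by
      refine hβmin μ (connL_of_walk hT1 p.1 ?_)
      intro e he
      exact hμ ▸ hmax e he
    have hgT : g ∈ T := (edge_mem_of_mem_walk_edges hgp).1
    obtain ⟨x, y, q, r, hgxy, hq, hr, hqs, hrs⟩ :=
      trail_split p.1 p.2.isTrail.edges_nodup hgp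
    have hbT : s(u, v) ∉ T := fun h => hbS (hT1 h)
    have hxyconn : EConn ((T \ {g}) ∪ {s(u, v)}) x y := by
      have h1 : EConn ((T \ {g}) ∪ {s(u, v)}) x u := by
        refine econn_of_walk_subset q.reverse ?_
        intro e he
        rw [SimpleGraph.Walk.edges_reverse, List.mem_reverse] at he
        exact Or.inl ⟨(edge_mem_of_mem_walk_edges he).1, fun hc => hq (hc ▸ he)⟩
      have h2 : EConn ((T \ {g}) ∪ {s(u, v)}) v y := by
        refine econn_of_walk_subset r.reverse ?_
        intro e he
        rw [SimpleGraph.Walk.edges_reverse, List.mem_reverse] at he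
        exact Or.inl ⟨(edge_mem_of_mem_walk_edges he).1, fun hc => hr (hc ▸ he)⟩
      exact h1.trans ((econn_of_mem (Or.inr rfl) hne).trans h2)
    have hswap := swap_tree hT2.1 hT2.2 hgT hbT hbe hgxy hxyconn
    have hsub : (T \ {g}) ∪ {s(u, v)} ⊆ S ∪ {s(u, v)} :=
      Set.union_subset_union (diff_subset.trans hT1) subset_rfl
    have hle := mtw_le (w := w) hsub hswap
    have hwt : edgeSetWeight w ((T \ {g}) ∪ {s(u, v)}) =
        edgeSetWeight w T - w g + w s(u, v) := by
      rw [weight_union_singleton (Set.toFinite _) (fun hcc => hbS (hT1 hcc.1)),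
        weight_sdiff_singleton (Set.toFinite T) hgT]
    rw [hwt, hT3] at hle
    have hβg : β ≤ w g := hμ ▸ hβμ
    linarith

/-- Conversely, the drop in MST weight upon adding an edge is bounded by `lam - w b`
for ANY connection level `lam`. -/
lemma mtw_drop_le [Fintype V] {w : Sym2 V → ℝ} {S : Set (Sym2 V)} (hS : S ⊆ G.edgeSet)
    (hSc : (fromEdgeSet S).Connected) {u v : V} (hne : u ≠ v) (hbe : s(u, v) ∈ G.edgeSet)
    (hbS : s(u, v) ∉ S) {lam : ℝ} (hwb : w s(u, v) ≤ lam) (hcl : ConnL w lam S u v) :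
    mtw G w S ≤ mtw G w (S ∪ {s(u, v)}) + (lam - w s(u, v)) := by
  have hS' : S ∪ {s(u, v)} ⊆ G.edgeSet := Set.union_subset hS (by simpa using hbe)
  have hSc' : (fromEdgeSet (S ∪ {s(u, v)})).Connected := by
    haveI := hSc.nonempty
    exact Connected.mk fun a c => econn_mono subset_union_left (hSc.preconnected a c)
  obtain ⟨T, hT1, hT2, hT3⟩ := mtw_attained (w := w) hS' hSc'
  by_cases hbT : s(u, v) ∈ T
  · have hsep : ¬ EConn (T \ {s(u, v)}) u v := by
      intro hcon
      haveI := hSc.nonempty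
      have hconn' : (fromEdgeSet (T \ {s(u, v)})).Connected :=
        Connected.mk fun z z' => econn_delete_edge rfl hcon
          ((SimpleGraph.IsTree.isConnected hT2.2).preconnected z z')
      have hcard := connected_card_le (nondiag_of_subset_edgeSet
        ((diff_subset.trans hT2.1))) hconn'
      have htc := tree_ncard (nondiag_of_subset_edgeSet hT2.1) hT2.2
      have hdi : (T \ {s(u, v)}).ncard + 1 = T.ncard :=
        Set.ncard_diff_singleton_add_one hbT (Set.toFinite T)
      omega
    obtain ⟨pw⟩ := hcl
    obtain ⟨x, y, hcw, hux, hnuy⟩ := exists_crossing_edge pw hsep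
    have hcmem : s(x, y) ∈ levE w lam S := (edge_mem_of_mem_walk_edges hcw).1
    have hxyne : x ≠ y := by
      have := (edge_mem_of_mem_walk_edges hcw).2
      simpa [Sym2.mk_isDiag_iff] using this
    have hcb : s(x, y) ≠ s(u, v) := fun h => hbS (h ▸ hcmem.1)
    have hcT : s(x, y) ∉ T := fun hcc =>
      hnuy (hux.trans (econn_of_mem (⟨hcc, by simpa using hcb⟩ : s(x, y) ∈ T \ {s(u, v)}) hxyne))
    have hyv : EConn (T \ {s(u, v)}) y v := by
      have h0 : EConn T y u := (SimpleGraph.IsTree.isConnected hT2.2).preconnected y u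
      rcases econn_delete_edge_cases (rfl : s(u, v) = s(u, v)) h0 with h1 | h1
      · exact absurd h1.symm hnuy
      · exact h1
    have hconnuv : EConn ((T \ {s(u, v)}) ∪ {s(x, y)}) u v :=
      (econn_mono subset_union_left hux).trans
        ((econn_of_mem (Or.inr rfl) hxyne).trans (econn_mono subset_union_left hyv))
    have hswap := swap_tree hT2.1 hT2.2 hbT hcT (hS hcmem.1) (rfl : s(u, v) = s(u, v)) hconnuv
    have hsub : (T \ {s(u, v)}) ∪ {s(x, y)} ⊆ S := by
      rintro e (he | he)
      · rcases hT1 he.1 with h | h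
        · exact h
        · exact absurd (by simpa using h) (by simpa using he.2)
      · rw [Set.mem_singleton_iff] at he
        exact he ▸ hcmem.1
    have hle := mtw_le (w := w) hsub hswap
    have hwt : edgeSetWeight w ((T \ {s(u, v)}) ∪ {s(x, y)}) =
        edgeSetWeight w T - w s(u, v) + w s(x, y) := by
      rw [weight_union_singleton (Set.toFinite _)
        (fun hcc => hcT hcc.1), weight_sdiff_singleton (Set.toFinite T) hbT]
    rw [hwt, hT3] at hle
    have := hcmem.2
    linarith
  · have hTS : T ⊆ S := by
      intro e he
      rcases hT1 he with h | h
      · exact h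
      · rw [Set.mem_singleton_iff] at h
        exact absurd (h ▸ he) hbT
    have := mtw_le (w := w) hTS hT2
    rw [hT3] at this
    linarith

-- ================= the core exchange induction =================

lemma gprime [Fintype V] {w : Sym2 V → ℝ} :
    ∀ (n : ℕ) (C A' B' : Set (Sym2 V)), A'.ncard = n →
      Disjoint A' B' → Disjoint A' C → Disjoint B' C →
      (∀ b ∈ B', ¬ b.IsDiag) →
      (∀ b ∈ B', ∃ (u v : V) (lam : ℝ), b = s(u, v) ∧ w b ≤ lam ∧
        ConnL w lam (C ∪ A') u v ∧ ¬ ConnL w lam (C ∪ (B' \ {b})) u v) →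
      B'.ncard ≤ n := by
  classical
  intro n
  induction n with
  | zero =>
    intro C A' B' hA _ _ _ _ hB
    have hA' : A' = ∅ := (Set.ncard_eq_zero (Set.toFinite A')).1 hA
    subst hA'
    have : B' = ∅ := by
      rw [Set.eq_empty_iff_forall_notMem]
      intro b hb
      obtain ⟨u, v, lam, _, _, hc, hn⟩ := hB b hb
      rw [Set.union_empty] at hc
      exact hn (econn_mono (levE_mono_set subset_union_left lam) hc)
    simp [this]
  | succ n ih =>
    intro C A' B' hA hAB hAC hBC hd hB
    rcases Set.eq_empty_or_nonempty B' with rfl | hBne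
    · simp
    -- choose witnesses
    have hV : Nonempty V := by
      obtain ⟨b0, _⟩ := hBne
      induction b0 using Sym2.ind with
      | _ x y => exact ⟨x⟩
    choose! uf vf lamf hw1 hw2 hw3 hw4 using hB
    -- minimize lamf over B'
    obtain ⟨b₁, hb₁, hb₁min⟩ :=
      Set.exists_min_image B' lamf (Set.toFinite B') hBne
    have hxy₁ := hw1 b₁ hb₁
    have hne₁ : uf b₁ ≠ vf b₁ := by
      have := hd b₁ hb₁
      rw [hxy₁] at this
      simpa [Sym2.mk_isDiag_iff] using this
    obtain ⟨p0⟩ := hw3 b₁ hb₁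
    set p := p0.toPath with hpdef
    by_cases hav : ∀ e ∈ p.1.edges, e ∉ A'
    · exfalso
      refine hw4 b₁ hb₁ (econn_of_walk_subset p.1 ?_)
      intro e he
      have hmem := (edge_mem_of_mem_walk_edges he).1
      rcases hmem.1 with hC | hA'mem
      · exact ⟨Or.inl hC, hmem.2⟩
      · exact absurd hA'mem (hav e he)
    · push_neg at hav
      obtain ⟨a, hap, haA⟩ := hav
      obtain ⟨x, y, q, r, haxy, hq, hr, hqs, hrs⟩ :=
        trail_split p.1 p.2.isTrail.edges_nodup hap
      have hab₁ : a ≠ b₁ := fun h => (Set.disjoint_left.1 hAB) haA (h ▸ hb₁)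
      have haC : a ∉ C := Set.disjoint_left.1 hAC haA
      have hb₁A : b₁ ∉ A' := Set.disjoint_left.1 hAB.symm hb₁
      -- set equality for the new A-side
      have eq2 : (C ∪ {b₁}) ∪ (A' \ {a}) = ((C ∪ A') ∪ {b₁}) \ {a} := by
        ext e
        simp only [Set.mem_union, Set.mem_diff, Set.mem_singleton_iff]
        constructor
        · rintro ((hC | rfl) | ⟨hA'e, hna⟩)
          · exact ⟨Or.inl (Or.inl hC), fun h => haC (h ▸ hC)⟩
          · exact ⟨Or.inr rfl, fun h => hab₁ h.symm⟩
          · exact ⟨Or.inl (Or.inr hA'e), hna⟩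
        · rintro ⟨(hC | hA'e) | rfl, hna⟩
          · exact Or.inl (Or.inl hC)
          · exact Or.inr ⟨hA'e, hna⟩
          · exact Or.inl (Or.inr rfl)
      -- verify the hypothesis for the smaller instance
      have hrec : ∀ b ∈ B' \ {b₁}, ∃ (u v : V) (lam : ℝ), b = s(u, v) ∧ w b ≤ lam ∧
          ConnL w lam ((C ∪ {b₁}) ∪ (A' \ {a})) u v ∧
          ¬ ConnL w lam ((C ∪ {b₁}) ∪ ((B' \ {b₁}) \ {b})) u v := by
        rintro b ⟨hbB, hbne⟩
        rw [Set.mem_singleton_iff] at hbne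
        have eq1 : (C ∪ {b₁}) ∪ ((B' \ {b₁}) \ {b}) = C ∪ (B' \ {b}) := by
          ext e
          simp only [Set.mem_union, Set.mem_diff, Set.mem_singleton_iff]
          constructor
          · rintro ((hC | rfl) | ⟨⟨h1, _⟩, h3⟩)
            · exact Or.inl hC
            · exact Or.inr ⟨hb₁, fun h => hbne h.symm⟩
            · exact Or.inr ⟨h1, h3⟩
          · rintro (hC | ⟨h1, h2⟩)
            · exact Or.inl (Or.inl hC)
            · by_cases he : e = b₁
              · exact Or.inl (Or.inr he)
              · exact Or.inr ⟨⟨h1, he⟩, h2⟩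
        refine ⟨uf b, vf b, lamf b, hw1 b hbB, hw2 b hbB, ?_, by rw [eq1]; exact hw4 b hbB⟩
        -- the rerouting argument
        have hlam : lamf b₁ ≤ lamf b := hb₁min b hbB
        have hxyE : EConn (levE w (lamf b) (((C ∪ A') ∪ {b₁}) \ {a})) x y := by
          have h1 : EConn (levE w (lamf b) (((C ∪ A') ∪ {b₁}) \ {a})) x (uf b₁) := by
            refine econn_of_walk_subset q.reverse ?_
            intro e he
            rw [SimpleGraph.Walk.edges_reverse, List.mem_reverse] at he
            have hm := (edge_mem_of_mem_walk_edges he).1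
            exact ⟨⟨Or.inl hm.1, fun hc => hq (Set.mem_singleton_iff.1 hc ▸ he)⟩,
              hm.2.trans hlam⟩
          have h2 : EConn (levE w (lamf b) (((C ∪ A') ∪ {b₁}) \ {a})) (vf b₁) y := by
            refine econn_of_walk_subset r.reverse ?_
            intro e he
            rw [SimpleGraph.Walk.edges_reverse, List.mem_reverse] at he
            have hm := (edge_mem_of_mem_walk_edges he).1
            exact ⟨⟨Or.inl hm.1, fun hc => hr (Set.mem_singleton_iff.1 hc ▸ he)⟩,
              hm.2.trans hlam⟩
          have hmid : EConn (levE w (lamf b) (((C ∪ A') ∪ {b₁}) \ {a})) (uf b₁) (vf b₁) := by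
            refine econn_of_mem ?_ hne₁
            rw [← hxy₁]
            exact ⟨⟨Or.inr rfl, fun hc => hab₁ (Set.mem_singleton_iff.1 hc).symm⟩,
              (hw2 b₁ hb₁).trans hlam⟩
          exact h1.trans (hmid.trans h2)
        have hWb : EConn (levE w (lamf b) ((C ∪ A') ∪ {b₁})) (uf b) (vf b) :=
          econn_mono (levE_mono_set subset_union_left (lamf b)) (hw3 b hbB)
        have := econn_delete_edge (X := levE w (lamf b) ((C ∪ A') ∪ {b₁})) haxy
          (by rw [← levE_sdiff]; exact hxyE) hWb
        rw [← levE_sdiff] at this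
        show EConn (levE w (lamf b) ((C ∪ {b₁}) ∪ (A' \ {a}))) (uf b) (vf b)
        rw [eq2]
        exact this
      -- apply the induction hypothesis
      have hcall := ih (C ∪ {b₁}) (A' \ {a}) (B' \ {b₁})
        (by
          have := Set.ncard_diff_singleton_add_one haA (Set.toFinite A')
          omega)
        (hAB.mono diff_subset diff_subset)
        (by
          rw [Set.disjoint_union_right]
          refine ⟨(hAC.mono_left diff_subset), ?_⟩
          rw [Set.disjoint_singleton_right]
          exact fun h => hb₁A h.1)
        (by
          rw [Set.disjoint_union_right]
          refine ⟨(hBC.mono_left diff_subset), ?_⟩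
          rw [Set.disjoint_singleton_right]
          exact fun h => h.2 rfl)
        (fun b hb => hd b hb.1)
        hrec
      have := Set.ncard_diff_singleton_add_one hb₁ (Set.toFinite B')
      omega

-- ================= the key exchange lemma =================

lemma key_exchange [Fintype V] {w : Sym2 V → ℝ} {E₀ : Set (Sym2 V)} (hE₀ : E₀ ⊆ G.edgeSet)
    (hconn : (fromEdgeSet E₀).Connected) {A B : Set (Sym2 V)}
    (hA : A ⊆ G.edgeSet \ E₀) (hB : B ⊆ G.edgeSet \ E₀) (hcard : A.ncard < B.ncard) :
    ∃ b ∈ B \ A, mtw G w (E₀ ∪ (A ∪ {b})) + mtw G w (E₀ ∪ (B \ {b})) ≤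
      mtw G w (E₀ ∪ A) + mtw G w (E₀ ∪ B) := by
  by_contra hcon
  push_neg at hcon
  haveI := hconn.nonempty
  have hsub : ∀ Z : Set (Sym2 V), Z ⊆ G.edgeSet \ E₀ → E₀ ∪ Z ⊆ G.edgeSet :=
    fun Z hZ => Set.union_subset hE₀ (fun e he => (hZ he).1)
  have hcn : ∀ Z : Set (Sym2 V), (fromEdgeSet (E₀ ∪ Z)).Connected :=
    fun Z => Connected.mk fun a c => econn_mono subset_union_left (hconn.preconnected a c)
  -- build the hypotheses of `gprime`
  have hyp : ∀ b ∈ B \ A, ∃ (u v : V) (lam : ℝ), b = s(u, v) ∧ w b ≤ lam ∧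
      ConnL w lam ((E₀ ∪ (A ∩ B)) ∪ (A \ B)) u v ∧
      ¬ ConnL w lam ((E₀ ∪ (A ∩ B)) ∪ ((B \ A) \ {b})) u v := by
    intro b hb
    have eqA : (E₀ ∪ (A ∩ B)) ∪ (A \ B) = E₀ ∪ A := by
      rw [Set.union_assoc, Set.inter_union_diff]
    have eqB : (E₀ ∪ (A ∩ B)) ∪ ((B \ A) \ {b}) = E₀ ∪ (B \ {b}) := by
      rw [Set.union_assoc]
      congr 1
      ext e
      simp only [Set.mem_union, Set.mem_inter_iff, Set.mem_diff, Set.mem_singleton_iff]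
      constructor
      · rintro (⟨h1, h2⟩ | ⟨⟨h1, h2⟩, h3⟩)
        · exact ⟨h2, fun h => hb.2 (h ▸ h1)⟩
        · exact ⟨h1, h3⟩
      · rintro ⟨h1, h2⟩
        by_cases hA' : e ∈ A
        · exact Or.inl ⟨hA', h1⟩
        · exact Or.inr ⟨⟨h1, hA'⟩, h2⟩
    induction b using Sym2.ind with
    | _ u v =>
      have hbe : s(u, v) ∈ G.edgeSet := (hB hb.1).1
      have hne : u ≠ v := by
        have := G.not_isDiag_of_mem_edgeSet hbe
        simpa [Sym2.mk_isDiag_iff] using this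
      have hbSA : s(u, v) ∉ E₀ ∪ A := by
        rintro (h | h)
        · exact (hB hb.1).2 h
        · exact hb.2 h
      obtain ⟨lam, hwb, hcl, hup⟩ := mtw_drop_ge (w := w) (hsub A hA) (hcn A) hne hbe hbSA
      refine ⟨u, v, lam, rfl, hwb, by rw [eqA]; exact hcl, ?_⟩
      intro hcl'
      rw [eqB] at hcl'
      have hbSB : s(u, v) ∉ E₀ ∪ (B \ {s(u, v)}) := by
        rintro (h | h)
        · exact (hB hb.1).2 h
        · exact h.2 rfl
      have hdown := mtw_drop_le (w := w) (hsub _ ((diff_subset).trans hB)) (hcn _)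
        hne hbe hbSB hwb hcl'
      have eqC : (E₀ ∪ (B \ {s(u, v)})) ∪ {s(u, v)} = E₀ ∪ B := by
        rw [Set.union_assoc, Set.diff_union_self, Set.union_singleton,
          Set.insert_eq_self.2 hb.1]
      rw [eqC] at hdown
      have eqD : (E₀ ∪ A) ∪ {s(u, v)} = E₀ ∪ (A ∪ {s(u, v)}) := by
        rw [Set.union_assoc]
      rw [eqD] at hup
      have := hcon s(u, v) hb
      linarith
  -- apply gprime
  have hdAB : Disjoint (A \ B) (B \ A) := disjoint_sdiff_sdiff
  have hdAC : Disjoint (A \ B) (E₀ ∪ (A ∩ B)) := by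
    rw [Set.disjoint_union_right]
    constructor
    · exact Set.disjoint_left.2 fun e he hE => (hA he.1).2 hE
    · exact Set.disjoint_left.2 fun e he hI => he.2 hI.2
  have hdBC : Disjoint (B \ A) (E₀ ∪ (A ∩ B)) := by
    rw [Set.disjoint_union_right]
    constructor
    · exact Set.disjoint_left.2 fun e he hE => (hB he.1).2 hE
    · exact Set.disjoint_left.2 fun e he hI => he.2 hI.1
  have hnd : ∀ b ∈ B \ A, ¬ b.IsDiag :=
    fun b hb => G.not_isDiag_of_mem_edgeSet ((hB hb.1).1)
  have := gprime (w := w) (A \ B).ncard (E₀ ∪ (A ∩ B)) (A \ B) (B \ A) rfl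
    hdAB hdAC hdBC hnd hyp
  -- contradiction with the cardinalities
  have h1 : (A \ B).ncard + (A ∩ B).ncard = A.ncard := by
    rw [← Set.ncard_inter_add_ncard_diff_eq_ncard A B (Set.toFinite A)]
    omega
  have h2 : (B \ A).ncard + (B ∩ A).ncard = B.ncard := by
    rw [← Set.ncard_inter_add_ncard_diff_eq_ncard B A (Set.toFinite B)]
    omega
  rw [Set.inter_comm B A] at h2
  omega

-- ================= stage lower bounds and the greedy chain =================

lemma Fset_finite [Fintype V] (w : Sym2 V → ℝ) (E₀ : Set (Sym2 V)) (t : ℕ) :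
    {r : ℝ | ∃ A, A ⊆ G.edgeSet \ E₀ ∧ A.ncard = t ∧ minTreeWeight G w E₀ A = r}.Finite := by
  have hsub : {r : ℝ | ∃ A, A ⊆ G.edgeSet \ E₀ ∧ A.ncard = t ∧ minTreeWeight G w E₀ A = r} ⊆
      (minTreeWeight G w E₀) '' {A | A ⊆ G.edgeSet \ E₀} := by
    rintro r ⟨A, h1, _, rfl⟩
    exact ⟨A, h1, rfl⟩
  exact ((Set.toFinite _).image _).subset hsub

lemma F_le [Fintype V] {w : Sym2 V → ℝ} {E₀ A : Set (Sym2 V)} {t : ℕ}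
    (hA : A ⊆ G.edgeSet \ E₀) (hc : A.ncard = t) :
    treeStageLowerBound G w E₀ t ≤ minTreeWeight G w E₀ A :=
  csInf_le (Fset_finite w E₀ t).bddBelow ⟨A, hA, hc, rfl⟩

lemma F_attained [Fintype V] {w : Sym2 V → ℝ} {E₀ : Set (Sym2 V)} {t : ℕ}
    (ht : t ≤ (G.edgeSet \ E₀).ncard) :
    ∃ A, A ⊆ G.edgeSet \ E₀ ∧ A.ncard = t ∧
      minTreeWeight G w E₀ A = treeStageLowerBound G w E₀ t := by
  have hne : {r : ℝ | ∃ A, A ⊆ G.edgeSet \ E₀ ∧ A.ncard = t ∧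
      minTreeWeight G w E₀ A = r}.Nonempty := by
    obtain ⟨A, hA1, hA2⟩ := Set.exists_subset_card_eq ht
    exact ⟨minTreeWeight G w E₀ A, A, hA1, hA2, rfl⟩
  obtain ⟨A, h1, h2, h3⟩ := hne.csInf_mem (Fset_finite w E₀ t)
  exact ⟨A, h1, h2, h3⟩

lemma step_lemma_s10 [Fintype V] {w : Sym2 V → ℝ} {E₀ : Set (Sym2 V)} (hE₀ : E₀ ⊆ G.edgeSet)
    (hconn : (fromEdgeSet E₀).Connected) {A : Set (Sym2 V)} {t : ℕ}
    (hA : A ⊆ G.edgeSet \ E₀) (hc : A.ncard = t)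
    (hopt : minTreeWeight G w E₀ A = treeStageLowerBound G w E₀ t)
    (ht : t + 1 ≤ (G.edgeSet \ E₀).ncard) :
    ∃ b ∈ (G.edgeSet \ E₀) \ A,
      minTreeWeight G w E₀ (A ∪ {b}) = treeStageLowerBound G w E₀ (t + 1) := by
  obtain ⟨B, hB1, hB2, hB3⟩ := F_attained (w := w) ht
  obtain ⟨b, hbBA, hkey⟩ := key_exchange (w := w) hE₀ hconn hA hB1 (by omega)
  have hbD : b ∈ (G.edgeSet \ E₀) \ A := ⟨hB1 hbBA.1, hbBA.2⟩
  refine ⟨b, hbD, ?_⟩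
  have hub : treeStageLowerBound G w E₀ t ≤ minTreeWeight G w E₀ (B \ {b}) :=
    F_le (diff_subset.trans hB1)
      (by rw [Set.ncard_diff_singleton_of_mem hbBA.1]; omega)
  have hlb : treeStageLowerBound G w E₀ (t + 1) ≤ minTreeWeight G w E₀ (A ∪ {b}) :=
    F_le (Set.union_subset hA (by simpa using hbD.1))
      (by rw [Set.union_singleton, Set.ncard_insert_of_notMem hbBA.2 (Set.toFinite A)]; omega)
  rw [← minTreeWeight_eq_mtw, ← minTreeWeight_eq_mtw, ← minTreeWeight_eq_mtw,
    ← minTreeWeight_eq_mtw, hopt, hB3] at hkey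
  linarith

lemma chain_exists_s10 [Fintype V] {w : Sym2 V → ℝ} {E₀ : Set (Sym2 V)} (hE₀ : E₀ ⊆ G.edgeSet)
    (hconn : (fromEdgeSet E₀).Connected) :
    ∀ n, n ≤ (G.edgeSet \ E₀).ncard → ∃ A : ℕ → Set (Sym2 V),
      A 0 = ∅ ∧
      (∀ i ≤ n, A i ⊆ G.edgeSet \ E₀ ∧ (A i).ncard = i ∧
        minTreeWeight G w E₀ (A i) = treeStageLowerBound G w E₀ i) ∧
      (∀ i, 1 ≤ i → i ≤ n → A (i - 1) ⊆ A i ∧ (A i \ A (i - 1)).ncard = 1) := by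
  intro n
  induction n with
  | zero =>
    intro _
    refine ⟨fun _ => ∅, rfl, ?_, by omega⟩
    intro i hi
    interval_cases i
    obtain ⟨A0, h1, h2, h3⟩ := F_attained (w := w) (E₀ := E₀) (t := 0) (by omega)
    have : A0 = ∅ := (Set.ncard_eq_zero (Set.toFinite A0)).1 h2
    rw [this] at h3
    exact ⟨Set.empty_subset _, Set.ncard_empty _, h3⟩
  | succ n ihn =>
    intro hn
    obtain ⟨A, hA0, hAopt, hAchain⟩ := ihn (by omega)
    obtain ⟨hsubn, hcn, hoptn⟩ := hAopt n le_rfl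
    obtain ⟨b, hbD, hbopt⟩ := step_lemma_s10 hE₀ hconn hsubn hcn hoptn hn
    classical
    refine ⟨fun i => if i ≤ n then A i else A n ∪ {b}, by simp [hA0], ?_, ?_⟩
    · intro i hi
      by_cases hin : i ≤ n
      · simpa [hin] using hAopt i hin
      · have : i = n + 1 := by omega
        subst this
        simp only [if_neg hin]
        refine ⟨Set.union_subset hsubn (by simpa using hbD.1), ?_, hbopt⟩
        rw [Set.union_singleton, Set.ncard_insert_of_notMem hbD.2 (Set.toFinite _), hcn]
    · intro i h1i hin
      by_cases hin' : i ≤ n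
      · have h1 : i - 1 ≤ n := by omega
        simpa [hin', h1] using hAchain i h1i hin'
      · have : i = n + 1 := by omega
        subst this
        simp only [Nat.add_sub_cancel, le_refl, if_pos, if_neg hin']
        constructor
        · exact subset_union_left
        · rw [Set.union_diff_left]
          have heq : ({b} : Set (Sym2 V)) \ A n = {b} := by
            ext e
            simp only [Set.mem_diff, Set.mem_singleton_iff, and_iff_left_iff_imp]
            rintro rfl
            exact hbD.2
          rw [heq, Set.ncard_singleton]

end Dev

/-- Incremental network design with minimum spanning trees: the minimum of
`Σ_{i=0}^{T} f(A_i)` over all sequences `∅ = A_0 ⊆ A_1 ⊆ ⋯ ⊆ A_T ⊆ E \ E₀` with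
`|A_i \ A_{i-1}| = 1` equals `Σ_{t=0}^{T} F_t`. -/
theorem ind_mst_value [Fintype V] (G : SimpleGraph V) (w : Sym2 V → ℝ)
    (E₀ : Set (Sym2 V)) (hE₀ : E₀ ⊆ G.edgeSet)
    (hconn : (SimpleGraph.fromEdgeSet E₀).Connected) :
    sInf {r : ℝ | ∃ A : ℕ → Set (Sym2 V), A 0 = ∅ ∧
        (∀ i, 1 ≤ i → i ≤ (G.edgeSet \ E₀).ncard →
          A (i - 1) ⊆ A i ∧ (A i \ A (i - 1)).ncard = 1) ∧
        (∀ i ≤ (G.edgeSet \ E₀).ncard, A i ⊆ G.edgeSet \ E₀) ∧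
        ∑ i ∈ Finset.range ((G.edgeSet \ E₀).ncard + 1), minTreeWeight G w E₀ (A i) = r} =
      ∑ t ∈ Finset.range ((G.edgeSet \ E₀).ncard + 1), treeStageLowerBound G w E₀ t := by
  set T := (G.edgeSet \ E₀).ncard with hT
  have lb : ∀ r ∈ {r : ℝ | ∃ A : ℕ → Set (Sym2 V), A 0 = ∅ ∧
      (∀ i, 1 ≤ i → i ≤ T → A (i - 1) ⊆ A i ∧ (A i \ A (i - 1)).ncard = 1) ∧
      (∀ i ≤ T, A i ⊆ G.edgeSet \ E₀) ∧
      ∑ i ∈ Finset.range (T + 1), minTreeWeight G w E₀ (A i) = r},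
      ∑ t ∈ Finset.range (T + 1), treeStageLowerBound G w E₀ t ≤ r := by
    rintro r ⟨A, hA0, hchain, hsub, rfl⟩
    have hcard : ∀ i, i ≤ T → (A i).ncard = i := by
      intro i
      induction i with
      | zero => intro _; rw [hA0]; exact Set.ncard_empty _
      | succ k ihk =>
        intro hk
        have hc := hchain (k + 1) (by omega) hk
        simp only [Nat.add_sub_cancel] at hc
        have h1 : (A (k + 1)).ncard = (A k).ncard + ((A (k + 1)) \ A k).ncard := by
          rw [Set.ncard_diff hc.1]
          have := Set.ncard_le_ncard hc.1 (Set.toFinite _)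
          omega
        rw [h1, hc.2, ihk (by omega)]
    refine Finset.sum_le_sum ?_
    intro i hi
    rw [Finset.mem_range] at hi
    exact F_le (hsub i (by omega)) (hcard i (by omega))
  obtain ⟨A, hA0, hAopt, hAchain⟩ := chain_exists_s10 (w := w) hE₀ hconn T le_rfl
  have hmem : (∑ t ∈ Finset.range (T + 1), treeStageLowerBound G w E₀ t) ∈
      {r : ℝ | ∃ A : ℕ → Set (Sym2 V), A 0 = ∅ ∧
      (∀ i, 1 ≤ i → i ≤ T → A (i - 1) ⊆ A i ∧ (A i \ A (i - 1)).ncard = 1) ∧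
      (∀ i ≤ T, A i ⊆ G.edgeSet \ E₀) ∧
      ∑ i ∈ Finset.range (T + 1), minTreeWeight G w E₀ (A i) = r} := by
    refine ⟨A, hA0, fun i h1 h2 => hAchain i h1 h2, fun i hi => (hAopt i hi).1, ?_⟩
    refine Finset.sum_congr rfl ?_
    intro i hi
    rw [Finset.mem_range] at hi
    exact (hAopt i (by omega)).2.2
  exact le_antisymm (csInf_le ⟨_, fun r hr => lb r hr⟩ hmem) (le_csInf ⟨_, hmem⟩ lb)
end

section
/- Single-edge update of a minimum spanning tree: let A ⊆ E \ E₀ and let X be an edge set such that (V, X) is a spanning tree of G with X ⊆ E₀ ∪ A and w(X) = f(A). Let e ∈ E \ (E₀ ∪ A), let C be the unique cycle contained in X + e, and let e' be an edge of C of maximum weight. Then (V, X + e − e') is a spanning tree of G with X + e − e' ⊆ E₀ ∪ A + e and w(X + e − e') = f(A + e). -/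
open Set

variable {V : Type*}

/-- `C` is (the edge set of) a cycle of the graph on `V` whose edge set is `Z`. -/
def IsCycleEdgeSet (Z C : Set (Sym2 V)) : Prop :=
  ∃ (v : V) (p : (SimpleGraph.fromEdgeSet Z).Walk v v),
    p.IsCycle ∧ C = {x | x ∈ p.edges}

open SimpleGraph

private lemma sym2_rep (z : Sym2 V) : ∃ a b, z = s(a, b) := by
  induction z using Sym2.ind with
  | _ a b => exact ⟨a, b, rfl⟩

private lemma fromEdgeSet_insert' (g : Sym2 V) (Z : Set (Sym2 V)) :
    fromEdgeSet (insert g Z) = fromEdgeSet Z ⊔ fromEdgeSet {g} := by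
  rw [Set.insert_eq, fromEdgeSet_union, sup_comm]

private lemma reach_decomp {G : SimpleGraph V} {a b u x : V}
    (h : (G ⊔ fromEdgeSet {s(a, b)}).Reachable u x) :
    G.Reachable u x ∨ (G.Reachable u a ∧ G.Reachable b x) ∨
      (G.Reachable u b ∧ G.Reachable a x) := by
  obtain ⟨p⟩ := h
  induction p with
  | nil => exact Or.inl (Reachable.refl _)
  | cons h' p ih =>
    rw [sup_adj, fromEdgeSet_adj, Set.mem_singleton_iff] at h'
    rcases h' with hG | ⟨heq, hne⟩
    · rcases ih with r | ⟨r1, r2⟩ | ⟨r1, r2⟩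
      · exact Or.inl (hG.reachable.trans r)
      · exact Or.inr (Or.inl ⟨hG.reachable.trans r1, r2⟩)
      · exact Or.inr (Or.inr ⟨hG.reachable.trans r1, r2⟩)
    · rcases Sym2.eq_iff.1 heq with ⟨rfl, rfl⟩ | ⟨rfl, rfl⟩
      · rcases ih with r | ⟨r1, r2⟩ | ⟨r1, r2⟩
        · exact Or.inr (Or.inl ⟨Reachable.refl _, r⟩)
        · exact Or.inl (r1.symm.trans r2)
        · exact Or.inl r2
      · rcases ih with r | ⟨r1, r2⟩ | ⟨r1, r2⟩
        · exact Or.inr (Or.inr ⟨Reachable.refl _, r⟩)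
        · exact Or.inl r2
        · exact Or.inl (r1.symm.trans r2)

private lemma reach_of_sup_edge {G : SimpleGraph V} {a b u v : V} (hab : G.Reachable a b)
    (h : (G ⊔ fromEdgeSet {s(a, b)}).Reachable u v) : G.Reachable u v := by
  rcases reach_decomp h with r | ⟨r1, r2⟩ | ⟨r1, r2⟩
  exacts [r, r1.trans (hab.trans r2), r1.trans (hab.symm.trans r2)]

private lemma reach_two_comp {G : SimpleGraph V} {a b x : V}
    (h : (G ⊔ fromEdgeSet {s(a, b)}).Reachable a x) :
    G.Reachable a x ∨ G.Reachable b x := by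
  rcases reach_decomp h with r | ⟨_, r2⟩ | ⟨_, r2⟩
  exacts [Or.inl r, Or.inr r2, Or.inl r2]

/-- The tree exchange lemma: replacing edge `s(c,d)` of a tree by a new edge `s(x,y)`
whose addition restores reachability of `c` and `d` yields a tree. -/
private lemma isTree_swap {Z : Set (Sym2 V)} {c d x y : V}
    (hcd : c ≠ d) (hxy : x ≠ y) (hfZ : s(c, d) ∉ Z) (hgZ : s(x, y) ∉ Z)
    (hT : (fromEdgeSet (insert s(c, d) Z)).IsTree)
    (hreach : (fromEdgeSet (insert s(x, y) Z)).Reachable c d) :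
    (fromEdgeSet (insert s(x, y) Z)).IsTree := by
  have hle : fromEdgeSet Z ≤ fromEdgeSet (insert s(x, y) Z) :=
    fromEdgeSet_mono (Set.subset_insert _ _)
  constructor
  · have hne : Nonempty V := hT.isConnected.nonempty
    refine ⟨fun u v => ?_⟩
    have h1 : (fromEdgeSet (insert s(c, d) Z)).Reachable u v := hT.isConnected.preconnected u v
    rw [fromEdgeSet_insert'] at h1
    exact reach_of_sup_edge hreach (h1.mono (sup_le_sup_right hle _))
  · intro v q hq
    by_cases hm : s(x, y) ∈ q.edges
    · have h2 := (adj_and_reachable_delete_edges_iff_exists_cycle.2 ⟨v, q, hq, hm⟩).2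
      rw [deleteEdges_fromEdgeSet, Set.insert_diff_of_mem _ (Set.mem_singleton _)] at h2
      have hxy' : (fromEdgeSet Z).Reachable x y :=
        h2.mono (fromEdgeSet_mono Set.diff_subset)
      -- `s(c,d)` is a bridge of the old tree, yet now reachable without it: contradiction
      have hb := isAcyclic_iff_forall_edge_isBridge.1 hT.IsAcyclic
        (e := s(c, d)) (by
          rw [edgeSet_fromEdgeSet]
          exact ⟨Set.mem_insert _ _, by simpa using hcd⟩)
      rw [isBridge_iff] at hb
      apply hb
      rw [deleteEdges_fromEdgeSet, Set.insert_diff_of_mem _ (Set.mem_singleton _),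
        Set.diff_singleton_eq_self hfZ]
      have h3 : (fromEdgeSet Z ⊔ fromEdgeSet {s(x, y)}).Reachable c d := by
        rwa [← fromEdgeSet_insert']
      exact reach_of_sup_edge hxy' h3
    · have hsub : ∀ z ∈ q.edges, z ∈ (fromEdgeSet (insert s(c, d) Z)).edgeSet := by
        intro z hz
        have h1 := q.edges_subset_edgeSet hz
        rw [edgeSet_fromEdgeSet] at h1 ⊢
        rcases h1 with ⟨h1, h1d⟩
        rcases h1 with rfl | h1
        · exact absurd hz hm
        · exact ⟨Set.mem_insert_of_mem _ h1, h1d⟩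
      exact hT.IsAcyclic (q.transfer _ hsub) (hq.transfer hsub)

private lemma edgeSetWeight_eq (w : Sym2 V → ℝ) {S : Set (Sym2 V)} (hS : S.Finite) :
    edgeSetWeight w S = ∑ x ∈ hS.toFinset, w x := by
  rw [edgeSetWeight, ← finsum_mem_coe_finset, Set.Finite.coe_toFinset]

private lemma edgeSetWeight_insert (w : Sym2 V → ℝ) {S : Set (Sym2 V)} (hS : S.Finite)
    {g : Sym2 V} (hg : g ∉ S) :
    edgeSetWeight w (insert g S) = w g + edgeSetWeight w S := by
  classical
  rw [edgeSetWeight_eq w (hS.insert g), edgeSetWeight_eq w hS,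
    show (hS.insert g).toFinset = insert g hS.toFinset from by ext; simp,
    Finset.sum_insert (by simpa using hg)]

private lemma edgeSetWeight_remove (w : Sym2 V → ℝ) {S : Set (Sym2 V)} (hS : S.Finite)
    {g : Sym2 V} (hg : g ∈ S) :
    edgeSetWeight w S = w g + edgeSetWeight w (S \ {g}) := by
  have h2 : insert g (S \ {g}) = S := by
    rw [Set.insert_diff_singleton, Set.insert_eq_self.2 hg]
  calc edgeSetWeight w S = edgeSetWeight w (insert g (S \ {g})) := by rw [h2]
    _ = _ := edgeSetWeight_insert w hS.diff (by simp)

private lemma treeSet_finite [Finite V] (G : SimpleGraph V) (w : Sym2 V → ℝ)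
    (U : Set (Sym2 V)) :
    {r : ℝ | ∃ X, X ⊆ U ∧ IsSpanningTreeEdgeSet G X ∧ edgeSetWeight w X = r}.Finite := by
  apply (Set.finite_range (edgeSetWeight w)).subset
  rintro r ⟨X, -, -, rfl⟩
  exact ⟨X, rfl⟩

private lemma minTreeWeight_le [Finite V] {G : SimpleGraph V} {w : Sym2 V → ℝ}
    {E₀ B X : Set (Sym2 V)} (h1 : X ⊆ E₀ ∪ B) (h2 : IsSpanningTreeEdgeSet G X) :
    minTreeWeight G w E₀ B ≤ edgeSetWeight w X :=
  csInf_le (treeSet_finite G w (E₀ ∪ B)).bddBelow ⟨X, h1, h2, rfl⟩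

/-- Single-edge update of a minimum spanning tree: if `X` is a minimum weight spanning
tree of `G` with edges in `E₀ ∪ A`, `e ∈ E \ (E₀ ∪ A)`, `C` is the (unique) cycle
contained in `X + e`, and `e'` is a maximum weight edge of `C`, then `X + e - e'` is a
minimum weight spanning tree of `G` with edges in `E₀ ∪ A + e`. -/
theorem mst_single_edge_update [Fintype V] (G : SimpleGraph V) (w : Sym2 V → ℝ)
    (E₀ : Set (Sym2 V)) (hE₀ : E₀ ⊆ G.edgeSet)
    (hconn : (SimpleGraph.fromEdgeSet E₀).Connected)
    (A : Set (Sym2 V)) (hA : A ⊆ G.edgeSet \ E₀)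
    (X : Set (Sym2 V)) (hX : IsSpanningTreeEdgeSet G X) (hXsub : X ⊆ E₀ ∪ A)
    (hXmin : edgeSetWeight w X = minTreeWeight G w E₀ A)
    (e : Sym2 V) (he : e ∈ G.edgeSet \ (E₀ ∪ A))
    (C : Set (Sym2 V)) (hC : IsCycleEdgeSet (insert e X) C)
    (e' : Sym2 V) (he'C : e' ∈ C) (he'max : ∀ x ∈ C, w x ≤ w e') :
    IsSpanningTreeEdgeSet G (insert e X \ {e'}) ∧
      insert e X \ {e'} ⊆ E₀ ∪ insert e A ∧
      edgeSetWeight w (insert e X \ {e'}) = minTreeWeight G w E₀ (insert e A) := by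
  obtain ⟨hXG, hXtree⟩ := hX
  obtain ⟨heG, heE⟩ := he
  have heX : e ∉ X := fun h => heE (hXsub h)
  obtain ⟨v, p, hp, rfl⟩ := hC
  have he'p : e' ∈ p.edges := he'C
  have hCsub : ∀ z ∈ p.edges, z ∈ insert e X := by
    intro z hz
    have h1 := p.edges_subset_edgeSet hz
    rw [edgeSet_fromEdgeSet] at h1
    exact h1.1
  have hCG : ∀ z ∈ p.edges, z ∈ G.edgeSet := by
    intro z hz
    rcases hCsub z hz with rfl | h
    exacts [heG, hXG h]
  -- the cycle must use `e`
  have heC : e ∈ p.edges := by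
    by_contra hne
    have hsub : ∀ z ∈ p.edges, z ∈ (fromEdgeSet X).edgeSet := by
      intro z hz
      rw [edgeSet_fromEdgeSet]
      refine ⟨?_, G.not_isDiag_of_mem_edgeSet (hCG z hz)⟩
      rcases hCsub z hz with rfl | h
      exacts [absurd hz hne, h]
    exact hXtree.IsAcyclic (p.transfer _ hsub) (hp.transfer hsub)
  obtain ⟨a, b, rfl⟩ := sym2_rep e
  have hab : a ≠ b := by
    intro h
    exact G.not_isDiag_of_mem_edgeSet heG (by simpa using h)
  -- weight of the new edge set
  have hwm : edgeSetWeight w (insert s(a, b) X \ {e'}) =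
      edgeSetWeight w X + w s(a, b) - w e' := by
    by_cases h : e' = s(a, b)
    · subst h; rw [Set.insert_diff_self_of_notMem heX]; ring
    · have he'X : e' ∈ X := by
        rcases hCsub e' he'p with h1 | h1
        exacts [absurd h1 h, h1]
      rw [Set.insert_diff_of_notMem _ (by simpa using Ne.symm h),
        edgeSetWeight_insert w (Set.toFinite _) (by simp [heX]),
        edgeSetWeight_remove w (Set.toFinite X) he'X]
      ring
  -- the new edge set is a tree
  have hT1tree : (fromEdgeSet (insert s(a, b) X \ {e'})).IsTree := by
    by_cases h : e' = s(a, b)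
    · rw [h, Set.insert_diff_self_of_notMem heX]; exact hXtree
    · have he'X : e' ∈ X := by
        rcases hCsub e' he'p with h1 | h1
        exacts [absurd h1 h, h1]
      obtain ⟨c, d, rfl⟩ := sym2_rep e'
      have hcd : c ≠ d := by
        intro h2
        exact G.not_isDiag_of_mem_edgeSet (hXG he'X) (by simpa using h2)
      have hrw : insert s(a, b) X \ {s(c, d)} = insert s(a, b) (X \ {s(c, d)}) :=
        Set.insert_diff_of_notMem _ (by simpa using Ne.symm h)
      rw [hrw]
      have hreach : (fromEdgeSet (insert s(a, b) (X \ {s(c, d)}))).Reachable c d := by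
        have h2 := (adj_and_reachable_delete_edges_iff_exists_cycle.2 ⟨v, p, hp, he'p⟩).2
        rwa [deleteEdges_fromEdgeSet, hrw] at h2
      refine isTree_swap hcd hab (by simp) (by simp [heX]) ?_ hreach
      rw [show insert s(c, d) (X \ {s(c, d)}) = X from by
        rw [Set.insert_diff_singleton, Set.insert_eq_self.2 he'X]]
      exact hXtree
  have hT1 : IsSpanningTreeEdgeSet G (insert s(a, b) X \ {e'}) := by
    refine ⟨fun z hz => ?_, hT1tree⟩
    rcases hz.1 with rfl | h
    exacts [heG, hXG h]
  have hsub2 : insert s(a, b) X \ {e'} ⊆ E₀ ∪ insert s(a, b) A := by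
    rintro z ⟨hz, -⟩
    rcases hz with rfl | hzX
    · exact Or.inr (Set.mem_insert _ _)
    · rcases hXsub hzX with h | h
      exacts [Or.inl h, Or.inr (Set.mem_insert_of_mem _ h)]
  refine ⟨hT1, hsub2, ?_⟩
  rw [hwm]
  have hX_le : ∀ {Y : Set (Sym2 V)}, Y ⊆ E₀ ∪ A → IsSpanningTreeEdgeSet G Y →
      edgeSetWeight w X ≤ edgeSetWeight w Y := fun h1 h2 =>
    le_of_eq_of_le hXmin (minTreeWeight_le h1 h2)
  refine le_antisymm ?_ ?_
  · -- lower bound: every spanning tree in E₀ ∪ A + e weighs at least this much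
    rw [minTreeWeight]
    refine le_csInf ⟨_, _, hsub2, hT1, rfl⟩ ?_
    rintro r ⟨T, hTsub, hTtree, rfl⟩
    have hwe : w s(a, b) ≤ w e' := he'max _ heC
    by_cases heT : s(a, b) ∈ T
    · -- T uses e; exchange e for a cycle edge crossing the cut
      obtain ⟨hTG, hTt⟩ := hTtree
      have hTrw : insert s(a, b) (T \ {s(a, b)}) = T := by
        rw [Set.insert_diff_singleton, Set.insert_eq_self.2 heT]
      have hsupT : fromEdgeSet T =
          fromEdgeSet (T \ {s(a, b)}) ⊔ fromEdgeSet {s(a, b)} := by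
        rw [← fromEdgeSet_insert', hTrw]
      have hbr : ¬ (fromEdgeSet (T \ {s(a, b)})).Reachable a b := by
        have hb := isAcyclic_iff_forall_edge_isBridge.1 hTt.IsAcyclic
          (e := s(a, b)) (by
            rw [edgeSet_fromEdgeSet]
            exact ⟨heT, by simpa using hab⟩)
        rw [isBridge_iff] at hb
        intro hr
        apply hb
        rwa [deleteEdges_fromEdgeSet]
      -- a walk from a to b within C \ {e}
      have hreach_ab : (fromEdgeSet ({x | x ∈ p.edges} \ {s(a, b)})).Reachable a b := by
        have hsub : ∀ z ∈ p.edges, z ∈ (fromEdgeSet {x | x ∈ p.edges}).edgeSet := by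
          intro z hz
          rw [edgeSet_fromEdgeSet]
          exact ⟨hz, G.not_isDiag_of_mem_edgeSet (hCG z hz)⟩
        have h2 := (adj_and_reachable_delete_edges_iff_exists_cycle.2
          ⟨v, p.transfer _ hsub, hp.transfer hsub, by
            rw [Walk.edges_transfer]; exact heC⟩).2
        rwa [deleteEdges_fromEdgeSet] at h2
      obtain ⟨q⟩ := hreach_ab
      have haS : a ∈ {x | (fromEdgeSet (T \ {s(a, b)})).Reachable a x} := Reachable.refl _
      obtain ⟨dd, hdd, hd1, hd2⟩ := q.exists_boundary_dart _ haS hbr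
      have hE : dd.edge = s(dd.fst, dd.snd) := rfl
      have hdne : dd.fst ≠ dd.snd := dd.fst_ne_snd
      have hgC : dd.edge ∈ {x | x ∈ p.edges} \ {s(a, b)} := by
        have h3 := dd.edge_mem
        rw [edgeSet_fromEdgeSet] at h3
        exact h3.1
      have hgX : dd.edge ∈ X := by
        rcases hCsub _ hgC.1 with h3 | h3
        · exact absurd h3 hgC.2
        · exact h3
      have htwo : ∀ x, (fromEdgeSet (T \ {s(a, b)})).Reachable a x ∨
          (fromEdgeSet (T \ {s(a, b)})).Reachable b x := by
        intro x
        have h3 := hTt.isConnected.preconnected a x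
        rw [hsupT] at h3
        exact reach_two_comp h3
      have hb_snd : (fromEdgeSet (T \ {s(a, b)})).Reachable b dd.snd :=
        (htwo dd.snd).resolve_left hd2
      have hgT : dd.edge ∉ T \ {s(a, b)} := by
        intro hmem
        exact hd2 (hd1.trans (Adj.reachable (by rw [fromEdgeSet_adj]; exact ⟨hmem, hdne⟩)))
      have hleK : fromEdgeSet (T \ {s(a, b)}) ≤
          fromEdgeSet (insert dd.edge (T \ {s(a, b)})) :=
        fromEdgeSet_mono (Set.subset_insert _ _)
      have hreachK : (fromEdgeSet (insert dd.edge (T \ {s(a, b)}))).Reachable a b := by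
        refine ((hd1.mono hleK).trans (Adj.reachable ?_)).trans (hb_snd.mono hleK).symm
        rw [hE, fromEdgeSet_adj]
        exact ⟨by rw [← hE]; exact Set.mem_insert _ _, hdne⟩
      have hT'tree : (fromEdgeSet (insert dd.edge (T \ {s(a, b)}))).IsTree := by
        rw [show insert dd.edge (T \ {s(a, b)}) = insert s(dd.fst, dd.snd) (T \ {s(a, b)})
          from by rw [hE]]
        refine isTree_swap hab hdne (by simp) (by rw [← hE]; exact hgT) ?_ ?_
        · rw [hTrw]; exact hTt
        · rw [← hE]; exact hreachK
      have hT'G : insert dd.edge (T \ {s(a, b)}) ⊆ G.edgeSet :=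
        Set.insert_subset (hXG hgX) (fun z hz => hTG hz.1)
      have hT'sub : insert dd.edge (T \ {s(a, b)}) ⊆ E₀ ∪ A := by
        refine Set.insert_subset (hXsub hgX) ?_
        rintro z ⟨hz1, hz2⟩
        rcases hTsub hz1 with h3 | h3
        · exact Or.inl h3
        · rcases h3 with rfl | h3
          · exact absurd rfl hz2
          · exact Or.inr h3
      have hle := hX_le hT'sub ⟨hT'G, hT'tree⟩
      have h1 : edgeSetWeight w (insert dd.edge (T \ {s(a, b)})) =
          w dd.edge + edgeSetWeight w (T \ {s(a, b)}) :=
        edgeSetWeight_insert w (Set.toFinite _) hgT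
      have h2 : edgeSetWeight w T = w s(a, b) + edgeSetWeight w (T \ {s(a, b)}) :=
        edgeSetWeight_remove w (Set.toFinite T) heT
      have hgw : w dd.edge ≤ w e' := he'max _ hgC.1
      linarith
    · -- T avoids e, so it is a tree within E₀ ∪ A
      have hTsub' : T ⊆ E₀ ∪ A := by
        intro z hz
        rcases hTsub hz with h | h
        · exact Or.inl h
        · rcases h with rfl | h
          · exact absurd hz heT
          · exact Or.inr h
      have := hX_le hTsub' hTtree
      linarith
  · rw [← hwm]
    exact minTreeWeight_le hsub2 hT1
end
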